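/- arXiv:1908.07616 — 8 statements merged into one kernel-verified Lean document; each statement's English description precedes it below -/
import Mathlib

section
/- Let (ξ_j)_{j≥0} be nonnegative real-valued random variables with partial sums S_0 = 0, S_n = ξ_0 + ... + ξ_{n-1}. Suppose there exist a constant c > 0 and a function g : ℕ → (0,∞) with ∑_{n≥1} 1/g(n) = ∞ such that P(limsup_{n→∞} S_n/g(n) ≤ c) = 1. Then for every integer k ≥ 1 and every real d ≥ 1, lim_{n→∞} E[ ∏_{i=0}^{n-1} (1 - 1/(d + S_i))^k ] = 0. -/
open MeasureTheory Filter Finset ProbabilityTheory Topology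

/-!
Almost surely `S_n ≤ (c + 1) g(n)` for large `n`, so `∑ 1/(d + S_i)` diverges by comparison with
`∑ 1/g(n)`. Since `1 - x ≤ exp (-x)`, the product `∏_{i<n} (1 - 1/(d + S_i))` is at most
`exp (-∑_{i<n} 1/(d + S_i)) → 0`, pathwise on that event, and bounded convergence (all products lie
in `[0, 1]`) carries this over to the expectations.
-/

lemma not_summable_min_of_not_summable {a : ℕ → ℝ} (ha : ¬Summable a) {b : ℝ} (hb : 0 < b) :
    ¬Summable fun n => min b (a n) := by
  intro hmin
  refine ha (hmin.congr_atTop ?_)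
  filter_upwards [hmin.tendsto_atTop_zero.eventually (eventually_lt_nhds hb)] with n hn
  exact min_eq_right ((min_lt_iff.1 hn).resolve_left (lt_irrefl b)).le

lemma not_summable_one_div_add_mul {g : ℕ → ℝ} (hg : ∀ n, 0 < g n)
    (hgdiv : ¬Summable fun n => 1 / g n) {d C : ℝ} (hd : 0 < d) (hC : 0 < C) :
    ¬Summable fun n => 1 / (d + C * g n) := by
  have hdC : 0 < d + C := by linarith
  have hscaled : ¬Summable fun n => (d + C)⁻¹ * (1 / g n) := by
    rwa [summable_mul_left_iff (inv_ne_zero hdC.ne')]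
  refine fun hsum => not_summable_min_of_not_summable hscaled (inv_pos.2 hdC) <|
    hsum.of_nonneg_of_le (fun n => le_min (inv_pos.2 hdC).le
      (mul_nonneg (inv_pos.2 hdC).le (one_div_nonneg.2 (hg n).le))) fun n => ?_
  have hgn := hg n
  -- `d + C g ≤ (d + C) max 1 g`
  rcases le_total (g n) 1 with h | h
  · refine (min_le_left _ _).trans ?_
    rw [one_div]
    gcongr
    nlinarith
  · refine (min_le_right _ _).trans ?_
    rw [← one_div, one_div_mul_one_div]
    gcongr
    nlinarith

lemma not_summable_one_div_add_of_eventually_le {s g : ℕ → ℝ} (hs : ∀ n, 0 ≤ s n)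
    (hg : ∀ n, 0 < g n) (hgdiv : ¬Summable fun n => 1 / g n) {d C : ℝ} (hd : 0 < d)
    (hC : 0 < C) (hsg : ∀ᶠ n in atTop, s n ≤ C * g n) :
    ¬Summable fun n => 1 / (d + s n) := fun hsum =>
  not_summable_one_div_add_mul hg hgdiv hd hC <| hsum.of_norm_bounded_eventually_nat <| by
    filter_upwards [hsg] with n hn
    have hsn := hs n
    have hgn := hg n
    rw [Real.norm_of_nonneg (by positivity)]
    gcongr

lemma tendsto_prod_one_sub_of_not_summable {u : ℕ → ℝ} (hu0 : ∀ n, 0 ≤ u n)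
    (hu1 : ∀ n, u n ≤ 1) (hu : ¬Summable u) :
    Tendsto (fun n => ∏ i ∈ range n, (1 - u i)) atTop (𝓝 0) := by
  have hsum : Tendsto (fun n => ∑ i ∈ range n, u i) atTop atTop :=
    (not_summable_iff_tendsto_nat_atTop_of_nonneg hu0).1 hu
  refine squeeze_zero (fun n => prod_nonneg fun i _ => sub_nonneg.2 (hu1 i)) (fun n => ?_)
    (Real.tendsto_exp_atBot.comp (tendsto_neg_atTop_atBot.comp hsum))
  calc ∏ i ∈ range n, (1 - u i) ≤ ∏ i ∈ range n, Real.exp (-u i) :=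
        prod_le_prod (fun i _ => sub_nonneg.2 (hu1 i)) fun i _ => Real.one_sub_le_exp_neg _
    _ = Real.exp (-∑ i ∈ range n, u i) := by rw [← Real.exp_sum, sum_neg_distrib]

lemma one_div_mem_Icc_of_one_le {x : ℝ} (hx : 1 ≤ x) : 1 / x ∈ Set.Icc (0 : ℝ) 1 :=
  ⟨one_div_nonneg.2 (zero_le_one.trans hx), by rw [div_le_one₀ (zero_lt_one.trans_le hx)]; exact hx⟩

lemma norm_prod_one_sub_pow_le_one {u : ℕ → ℝ} (hu : ∀ n, u n ∈ Set.Icc (0 : ℝ) 1) (k n : ℕ) :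
    ‖∏ i ∈ range n, (1 - u i) ^ k‖ ≤ 1 := by
  rw [norm_prod]
  refine prod_le_one (fun _ _ => norm_nonneg _) fun i _ => ?_
  rw [norm_pow, Real.norm_of_nonneg (sub_nonneg.2 (hu i).2)]
  exact pow_le_one₀ (sub_nonneg.2 (hu i).2) (sub_le_self _ (hu i).1)

lemma tendsto_prod_one_sub_one_div_add_pow {s g : ℕ → ℝ} (hs : ∀ n, 0 ≤ s n)
    (hg : ∀ n, 0 < g n) (hgdiv : ¬Summable fun n => 1 / g n) {d C : ℝ} (hd : 1 ≤ d)
    (hC : 0 < C) (hsg : ∀ᶠ n in atTop, s n ≤ C * g n) {k : ℕ} (hk : k ≠ 0) :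
    Tendsto (fun n => ∏ i ∈ range n, (1 - 1 / (d + s i)) ^ k) atTop (𝓝 0) := by
  have hu := fun n => one_div_mem_Icc_of_one_le (show 1 ≤ d + s n by linarith [hs n])
  simpa only [prod_pow, zero_pow hk] using
    (tendsto_prod_one_sub_of_not_summable (fun n => (hu n).1) (fun n => (hu n).2)
      (not_summable_one_div_add_of_eventually_le hs hg hgdiv (by linarith) hC hsg)).pow k

lemma eventually_le_mul_of_limsup_div_le {s g : ℕ → ℝ} (hg : ∀ n, 0 < g n) {c C : ℝ}
    (hlim : limsup (fun n => ((s n / g n : ℝ) : EReal)) atTop ≤ c) (hcC : c < C) :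
    ∀ᶠ n in atTop, s n ≤ C * g n := by
  filter_upwards [eventually_lt_of_limsup_lt (hlim.trans_lt (EReal.coe_lt_coe_iff.2 hcC))]
    with n hn
  exact ((div_lt_iff₀ (hg n)).1 (EReal.coe_lt_coe_iff.1 hn)).le

/-- analytic core of Lemma 3.2(i).
If the environment `ξ` satisfies condition (S), i.e. there are `c > 0` and a positive
function `g` with non-summable inverse such that almost surely
`limsup_n S_n / g(n) ≤ c`, then for every integer `k ≥ 1` and real `d ≥ 1`,
`E[∏_{i=0}^{n-1} (1 - 1/(d + S_i))^k] → 0` as `n → ∞`. -/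
theorem tbrw_trap_exit_prob_tendsto_zero
    {Ω : Type*} [MeasurableSpace Ω] (P : Measure Ω) [IsProbabilityMeasure P]
    (ξ : ℕ → Ω → ℝ) (hmeas : ∀ j, Measurable (ξ j)) (hnonneg : ∀ j ω, 0 ≤ ξ j ω)
    (c : ℝ) (hc : 0 < c) (g : ℕ → ℝ) (hg : ∀ n, 0 < g n)
    (hgdiv : ¬ Summable (fun n => 1 / g n))
    (hS : P {ω | Filter.limsup
        (fun n => (((∑ j ∈ Finset.range n, ξ j ω) / g n : ℝ) : EReal)) Filter.atTop
        ≤ (c : EReal)} = 1) :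
    ∀ k : ℕ, 1 ≤ k → ∀ d : ℝ, 1 ≤ d →
      Filter.Tendsto
        (fun n => ∫ ω, ∏ i ∈ Finset.range n,
          (1 - 1 / (d + ∑ j ∈ Finset.range i, ξ j ω)) ^ k ∂P)
        Filter.atTop (nhds 0) := by
  intro k hk d hd
  set S : ℕ → Ω → ℝ := fun n ω => ∑ j ∈ range n, ξ j ω
  have hS_nonneg : ∀ n ω, 0 ≤ S n ω := fun n ω => sum_nonneg fun j _ => hnonneg j ω
  have hS_meas : ∀ n, Measurable (S n) := fun n => Finset.measurable_sum _ fun j _ => hmeas j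
  have hgrowth : ∀ᵐ ω ∂P, ∀ᶠ n in atTop, S n ω ≤ (c + 1) * g n := by
    have hset : MeasurableSet {ω | limsup (fun n => ((S n ω / g n : ℝ) : EReal)) atTop ≤ c} :=
      measurableSet_le (Measurable.limsup fun n =>
        measurable_coe_real_ereal.comp ((hS_meas n).div_const _)) measurable_const
    filter_upwards [(mem_ae_iff_prob_eq_one hset).2 hS] with ω hω
    exact eventually_le_mul_of_limsup_div_le hg hω (lt_add_one c)
  have hu : ∀ ω n, 1 / (d + S n ω) ∈ Set.Icc (0 : ℝ) 1 := fun ω n =>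
    one_div_mem_Icc_of_one_le (by linarith [hS_nonneg n ω])
  simpa only [integral_zero] using tendsto_integral_of_dominated_convergence (fun _ => 1)
    (F := fun n ω => ∏ i ∈ range n, (1 - 1 / (d + S i ω)) ^ k)
    (fun n => Measurable.aestronglyMeasurable (by fun_prop))
    (integrable_const 1)
    (fun n => .of_forall fun ω => norm_prod_one_sub_pow_le_one (hu ω) k n)
    (hgrowth.mono fun ω hω => tendsto_prod_one_sub_one_div_add_pow (fun n => hS_nonneg n ω) hg
      hgdiv hd (by linarith) hω (by omega))
end

section
/- Let (ξ_j)_{j≥0} be nonnegative real-valued random variables with partial sums S_0 = 0, S_n = ξ_0 + ... + ξ_{n-1}. Suppose there exist a constant c > 0 and a function f : ℕ → (0,∞) with ∑_{n≥1} 1/f(n) < ∞ such that P(liminf_{n→∞} S_n/f(n) ≥ c) = 1. Then for every integer k ≥ 1 there exists a constant C > 0, depending only on k, c, f and the joint law of (ξ_j), such that for all integers d > ℓ ≥ 1, lim_{n→∞} E[ ∏_{i=0}^{n-1} (1 - (d-ℓ)/(d + S_i))^k ] ≥ e^{-C(d-ℓ)} > 0. -/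
/-!
Each factor satisfies `1 - a / (d + s) ≥ exp (-a / (ℓ + s))` with `a = d - ℓ`, so the product is at
least `exp (-k a ∑ᵢ 1 / (ℓ + Sᵢ))`. By condition (I) there is an `N` such that with probability
more than `1/2` we have `Sₙ ≥ (c/2) f n` for all `n ≥ N`; on that event the sum is at most
`B = N + 2 ∑ 1 / f n / c`. Hence the expectations, which decrease in `n`, stay above
`exp (-k a B) / 2 ≥ exp (-(k B + log 2) a)`, using `a ≥ 1`.
-/

open MeasureTheory Filter Finset

namespace Real

theorem exp_neg_div_le_one_sub_div {a s : ℝ} (ha : 0 ≤ a) (hs : 0 < s) :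
    exp (-(a / s)) ≤ 1 - a / (s + a) := by
  have hsa : 0 < s + a := by linarith
  rw [exp_neg, one_sub_div hsa.ne', add_sub_cancel_right,
    inv_le_comm₀ (exp_pos _) (div_pos hs hsa), inv_div]
  calc (s + a) / s = a / s + 1 := by field_simp; ring
    _ ≤ exp (a / s) := add_one_le_exp _

theorem exp_neg_add_log_two_mul_le {x a : ℝ} (ha : 1 ≤ a) :
    exp (-(x + log 2) * a) ≤ exp (-(x * a)) * 2⁻¹ := by
  rw [← exp_log (by norm_num : (0 : ℝ) < 2⁻¹), log_inv, ← exp_add, exp_le_exp]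
  nlinarith [log_pos one_lt_two]

end Real

theorem antitone_prod_range_of_le_one {u : ℕ → ℝ} (h0 : ∀ i, 0 ≤ u i) (h1 : ∀ i, u i ≤ 1) :
    Antitone fun n => ∏ i ∈ range n, u i :=
  antitone_nat_of_succ_le fun n => by
    rw [prod_range_succ]
    exact mul_le_of_le_one_right (prod_nonneg fun i _ => h0 i) (h1 n)

theorem sum_range_one_div_le_of_forall_ge {u f : ℕ → ℝ} {b : ℝ} {N : ℕ} (hb : 0 < b)
    (hf : ∀ n, 0 < f n) (hfsum : Summable fun n => 1 / f n) (hu : ∀ i, 1 ≤ u i)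
    (huf : ∀ i ≥ N, b * f i ≤ u i) (n : ℕ) :
    ∑ i ∈ range n, 1 / u i ≤ N + (∑' i, 1 / f i) / b := by
  have hterm (i : ℕ) : 1 / u i ≤ (if i < N then 1 else 0) + 1 / f i / b := by
    have htail : 0 ≤ 1 / f i / b := by have := hf i; positivity
    split_ifs with hi
    · have : 1 / u i ≤ 1 := (div_le_one (by linarith [hu i])).2 (hu i)
      linarith
    · rw [zero_add, div_div, mul_comm]
      exact one_div_le_one_div_of_le (mul_pos hb (hf i)) (huf i (not_lt.1 hi))
  calc ∑ i ∈ range n, 1 / u i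
      ≤ ∑ i ∈ range n, ((if i < N then 1 else 0) + 1 / f i / b) := sum_le_sum fun i _ => hterm i
    _ = #{i ∈ range n | i < N} + (∑ i ∈ range n, 1 / f i) / b := by
      rw [sum_add_distrib, sum_boole, sum_div]
    _ ≤ N + (∑' i, 1 / f i) / b := by
      gcongr
      · exact_mod_cast (card_le_card fun i hi => mem_range.2 (mem_filter.1 hi).2).trans
          (card_range N).le
      · exact hfsum.sum_le_tsum _ fun i _ => (one_div_pos.2 (hf i)).le

theorem exp_neg_mul_sum_le_prod_one_sub_div_pow {d ℓ : ℝ} {s : ℕ → ℝ} (hℓ : 0 < ℓ)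
    (hℓd : ℓ ≤ d) (hs : ∀ i, 0 ≤ s i) (k n : ℕ) :
    Real.exp (-(k * (∑ i ∈ range n, 1 / (ℓ + s i)) * (d - ℓ))) ≤
      ∏ i ∈ range n, (1 - (d - ℓ) / (d + s i)) ^ k := by
  have hfactor (i : ℕ) : Real.exp (-((d - ℓ) / (ℓ + s i))) ≤ 1 - (d - ℓ) / (d + s i) := by
    have := Real.exp_neg_div_le_one_sub_div (sub_nonneg.2 hℓd) (by linarith [hs i] : 0 < ℓ + s i)
    rwa [show ℓ + s i + (d - ℓ) = d + s i by ring] at this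
  calc Real.exp (-(k * (∑ i ∈ range n, 1 / (ℓ + s i)) * (d - ℓ)))
      = ∏ i ∈ range n, Real.exp (-((d - ℓ) / (ℓ + s i))) ^ k := by
        simp only [← Real.exp_nat_mul, ← Real.exp_sum, mul_assoc, sum_mul, mul_sum, one_div_mul_eq_div,
          ← sum_neg_distrib, mul_neg]
    _ ≤ _ := prod_le_prod (fun i _ => by positivity) fun i _ =>
      pow_le_pow_left₀ (by positivity) (hfactor i) k

theorem eventually_mul_le_of_le_liminf {x f : ℕ → ℝ} {c c' : ℝ} (hf : ∀ n, 0 < f n)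
    (hc' : c' < c) (h : (c : EReal) ≤ liminf (fun n => ((x n / f n : ℝ) : EReal)) atTop) :
    ∀ᶠ n in atTop, c' * f n ≤ x n := by
  filter_upwards [eventually_lt_of_lt_liminf ((EReal.coe_lt_coe_iff.2 hc').trans_le h)] with n hn
  exact ((lt_div_iff₀ (hf n)).1 (EReal.coe_lt_coe_iff.1 hn)).le

section Measure

variable {Ω : Type*} [MeasurableSpace Ω] {P : Measure Ω}

theorem exists_lt_measure_forall_ge_mul_le {x : ℕ → Ω → ℝ} {f : ℕ → ℝ} {c c' : ℝ}
    {r : ENNReal} (hf : ∀ n, 0 < f n) (hc' : c' < c) (hr : r < 1)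
    (h : P {ω | (c : EReal) ≤ liminf (fun n => ((x n ω / f n : ℝ) : EReal)) atTop} = 1) :
    ∃ N, r < P {ω | ∀ n ≥ N, c' * f n ≤ x n ω} := by
  have hmono : Monotone fun N => {ω | ∀ n ≥ N, c' * f n ≤ x n ω} :=
    fun M N hMN ω hω n hn => hω n (hMN.trans hn)
  have hcover : 1 ≤ P (⋃ N, {ω | ∀ n ≥ N, c' * f n ≤ x n ω}) :=
    h ▸ measure_mono fun ω hω =>
      Set.mem_iUnion.2 (eventually_atTop.1 (eventually_mul_le_of_le_liminf hf hc' hω))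
  exact ((tendsto_measure_iUnion_atTop hmono).eventually (lt_mem_nhds (hr.trans_le hcover))).exists

theorem exists_tendsto_integral_prod_ge [IsFiniteMeasure P] {S : ℕ → Ω → ℝ}
    (hS : ∀ i, Measurable (S i)) (hS0 : ∀ i ω, 0 ≤ S i ω) {d ℓ : ℝ} (hℓ : 0 < ℓ) (hℓd : ℓ ≤ d)
    {A : Set Ω} (hA : MeasurableSet A) {B : ℝ}
    (hB : ∀ ω ∈ A, ∀ n, ∑ i ∈ range n, 1 / (ℓ + S i ω) ≤ B) (k : ℕ) :
    ∃ L, Tendsto (fun n => ∫ ω, ∏ i ∈ range n, (1 - (d - ℓ) / (d + S i ω)) ^ k ∂P) atTop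
        (nhds L) ∧
      Real.exp (-(k * B * (d - ℓ))) * P.real A ≤ L := by
  set g : ℕ → Ω → ℝ := fun n ω => ∏ i ∈ range n, (1 - (d - ℓ) / (d + S i ω)) ^ k
  have hfactor (i : ℕ) (ω : Ω) :
      0 ≤ (1 - (d - ℓ) / (d + S i ω)) ^ k ∧ (1 - (d - ℓ) / (d + S i ω)) ^ k ≤ 1 := by
    have : (d - ℓ) / (d + S i ω) ≤ 1 :=
      div_le_one_of_le₀ (by linarith [hS0 i ω]) (by linarith [hS0 i ω])
    have : 0 ≤ (d - ℓ) / (d + S i ω) := div_nonneg (by linarith) (by linarith [hS0 i ω])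
    exact ⟨pow_nonneg (by linarith) k, pow_le_one₀ (by linarith) (by linarith)⟩
  have hg0 (n : ℕ) (ω : Ω) : 0 ≤ g n ω := prod_nonneg fun i _ => (hfactor i ω).1
  have hint (n : ℕ) : Integrable (g n) P :=
    Integrable.of_bound (by fun_prop) 1 (ae_of_all _ fun ω => by
      rw [Real.norm_of_nonneg (hg0 n ω)]
      exact prod_le_one (fun i _ => (hfactor i ω).1) fun i _ => (hfactor i ω).2)
  have hanti : Antitone fun n => ∫ ω, g n ω ∂P := fun m n hmn =>
    integral_mono (hint n) (hint m) fun ω =>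
      antitone_prod_range_of_le_one (fun i => (hfactor i ω).1) (fun i => (hfactor i ω).2) hmn
  refine ⟨⨅ n, ∫ ω, g n ω ∂P, tendsto_atTop_ciInf hanti ⟨0, ?_⟩, le_ciInf fun n => ?_⟩
  · rintro _ ⟨n, rfl⟩
    exact integral_nonneg (hg0 n)
  have hlower : ∀ ω ∈ A, Real.exp (-(k * B * (d - ℓ))) ≤ g n ω := fun ω hω => by
    refine le_trans ?_ (exp_neg_mul_sum_le_prod_one_sub_div_pow hℓ hℓd (hS0 · ω) k n)
    gcongr
    exact hB ω hω n
  calc Real.exp (-(k * B * (d - ℓ))) * P.real A ≤ ∫ ω in A, g n ω ∂P :=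
        setIntegral_ge_of_const_le_real hA (measure_ne_top _ _) hlower (hint n).integrableOn
    _ ≤ ∫ ω, g n ω ∂P := setIntegral_le_integral (hint n) (ae_of_all _ (hg0 n))

end Measure

/-- analytic core of Lemma 3.2(ii).
If the environment `ξ` satisfies condition (I), i.e. there are `c > 0` and a positive
function `f` with summable inverse such that almost surely `liminf_n S_n / f(n) ≥ c`,
then for every integer `k ≥ 1` there is a constant `C > 0` such that for all integers
`d > ℓ ≥ 1`, the (existing, monotone) limit of
`E[∏_{i=0}^{n-1} (1 - (d-ℓ)/(d + S_i))^k]` is at least `e^{-C(d-ℓ)} > 0`. -/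
theorem tbrw_trap_prob_positive_limit
    {Ω : Type*} [MeasurableSpace Ω] (P : Measure Ω) [IsProbabilityMeasure P]
    (ξ : ℕ → Ω → ℝ) (hmeas : ∀ j, Measurable (ξ j)) (hnonneg : ∀ j ω, 0 ≤ ξ j ω)
    (c : ℝ) (hc : 0 < c) (f : ℕ → ℝ) (hf : ∀ n, 0 < f n)
    (hfsum : Summable (fun n => 1 / f n))
    (hI : P {ω | (c : EReal) ≤ Filter.liminf
        (fun n => (((∑ j ∈ Finset.range n, ξ j ω) / f n : ℝ) : EReal)) Filter.atTop} = 1) :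
    ∀ k : ℕ, 1 ≤ k →
      ∃ C : ℝ, 0 < C ∧ ∀ d ℓ : ℕ, 1 ≤ ℓ → ℓ < d →
        ∃ L : ℝ,
          Filter.Tendsto
            (fun n => ∫ ω, ∏ i ∈ Finset.range n,
              (1 - ((d : ℝ) - ℓ) / ((d : ℝ) + ∑ j ∈ Finset.range i, ξ j ω)) ^ k ∂P)
            Filter.atTop (nhds L) ∧
          Real.exp (-C * ((d : ℝ) - ℓ)) ≤ L := by
  intro k _
  set S : ℕ → Ω → ℝ := fun i ω => ∑ j ∈ range i, ξ j ω
  have hS (i : ℕ) : Measurable (S i) := by fun_prop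
  have hS0 (i : ℕ) (ω : Ω) : 0 ≤ S i ω := sum_nonneg fun j _ => hnonneg j ω
  obtain ⟨N, hN⟩ :=
    exists_lt_measure_forall_ge_mul_le hf (half_lt_self hc) ENNReal.one_half_lt_one hI
  set A := {ω | ∀ n ≥ N, c / 2 * f n ≤ S n ω}
  have hA : MeasurableSet A := by
    simp only [A, Set.ofPred_forall]
    exact .iInter fun n => .iInter fun _ => measurableSet_le measurable_const (hS n)
  have hPA : 2⁻¹ ≤ P.real A := by
    simpa [Measure.real] using ENNReal.toReal_mono (measure_ne_top P A) hN.le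
  set B : ℝ := N + (∑' n, 1 / f n) / (c / 2)
  have hB0 : 0 ≤ B := by
    have : 0 ≤ ∑' n, 1 / f n := tsum_nonneg fun n => (one_div_pos.2 (hf n)).le
    positivity
  refine ⟨k * B + Real.log 2, by positivity, fun d ℓ hℓ hd => ?_⟩
  have hℓ' : (1 : ℝ) ≤ ℓ := by exact_mod_cast hℓ
  have hd' : (ℓ : ℝ) + 1 ≤ d := by exact_mod_cast hd
  obtain ⟨L, hL, hLB⟩ := exists_tendsto_integral_prod_ge (P := P) (d := d) (ℓ := ℓ) hS hS0
    (by linarith) (by linarith) hA (fun ω hω n => sum_range_one_div_le_of_forall_ge (half_pos hc)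
      hf hfsum (fun i => by linarith [hS0 i ω]) (fun i hi => by linarith [hS0 i ω, hω i hi]) n) k
  refine ⟨L, hL, le_trans ?_ hLB⟩
  calc Real.exp (-(k * B + Real.log 2) * (d - ℓ)) ≤ Real.exp (-(k * B * (d - ℓ))) * 2⁻¹ :=
        Real.exp_neg_add_log_two_mul_le (by linarith)
    _ ≤ Real.exp (-(k * B * (d - ℓ))) * P.real A := by gcongr
end

section
/- Let (ξ_j)_{j≥0} be i.i.d. nonnegative real-valued random variables with finite mean μ = E[ξ_0], and let S_0 = 0, S_n = ξ_0 + ... + ξ_{n-1}. If k is a positive integer with k < μ, then for every integer d ≥ 2, ∑_{n≥1} E[ ∏_{i=0}^{n-1} (1 - 1/(d + S_i))^k ] = ∞. -/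
/-!
By the strong law of large numbers, almost surely `S_n ≥ a n` eventually, for some `a` with
`k < a < μ`. Bernoulli's inequality then makes the factors `(1 - 1/(d + S_n))^k` at least
`(n + 1)/(n + 2)` eventually, so along almost every path the products dominate a multiple of the
harmonic series. If the series of expectations converged, monotone convergence would make the
series of products converge almost surely, a contradiction.
-/

open MeasureTheory Filter Finset ProbabilityTheory

lemma not_summable_of_eventually_succ_mul_le {c : ℕ → ℝ} (hc : ∀ n, 0 < c n)
    (h : ∀ᶠ n : ℕ in atTop, ((n : ℝ) + 1) * c n ≤ ((n : ℝ) + 2) * c (n + 1)) : ¬ Summable c := by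
  obtain ⟨N, hN⟩ := eventually_atTop.1 h
  have hgrowth : ∀ n, N ≤ n → ((N : ℝ) + 1) * c N ≤ ((n : ℝ) + 1) * c n := by
    intro n hn
    induction n, hn using Nat.le_induction with
    | base => rfl
    | succ n hn ih =>
      push_cast
      linarith [hN n hn]
  set K := ((N : ℝ) + 1) * c N
  have hK : 0 < K := by have := hc N; positivity
  have harmonic : ¬ Summable fun n : ℕ => 1 / ((n : ℝ) + 1) := by
    exact_mod_cast mt (summable_nat_add_iff 1).1 Real.not_summable_one_div_natCast
  refine fun hs => harmonic ((hs.div_const K).of_norm_bounded_eventually_nat ?_)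
  filter_upwards [eventually_ge_atTop N] with n hn
  rw [Real.norm_of_nonneg (by positivity), div_le_div_iff₀ (by positivity) hK]
  linarith [hgrowth n hn]

lemma sub_one_le_mul_one_sub_inv_pow {k : ℕ} {s x : ℝ} (hx : 1 ≤ x) (hs : 0 ≤ s)
    (hks : k * s ≤ x) : s - 1 ≤ s * (1 - 1 / x) ^ k := by
  have hskx : s * k / x ≤ 1 := (div_le_one (by linarith)).2 (by linarith)
  have hbernoulli : 1 + k * ((1 - 1 / x) - 1) ≤ (1 - 1 / x) ^ k :=
    one_add_mul_sub_le_pow (by have := div_le_one_of_le₀ hx (by linarith); linarith) k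
  calc s - 1 ≤ s * (1 + k * ((1 - 1 / x) - 1)) := by
        have : s * (1 + k * ((1 - 1 / x) - 1)) = s - s * k / x := by ring
        linarith
    _ ≤ s * (1 - 1 / x) ^ k := by gcongr

theorem not_summable_prod_one_sub_inv_pow {k : ℕ} {a : ℝ} (hka : k < a) {x : ℕ → ℝ}
    (hx : ∀ i, 1 < x i) (hax : ∀ᶠ i in atTop, a * i ≤ x i) :
    ¬ Summable fun n => ∏ i ∈ range n, (1 - 1 / x i) ^ k := by
  have hprod_pos : ∀ n, 0 < ∏ i ∈ range n, (1 - 1 / x i) ^ k := fun n =>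
    prod_pos fun i _ => pow_pos (sub_pos.2 ((div_lt_one (by linarith [hx i])).2 (hx i))) k
  apply not_summable_of_eventually_succ_mul_le hprod_pos
  have hlinear : ∀ᶠ n : ℕ in atTop, 2 * k ≤ (a - k) * n :=
    (tendsto_natCast_atTop_atTop.const_mul_atTop (sub_pos.2 hka)).eventually_ge_atTop _
  filter_upwards [hax, hlinear] with n hn hkn
  have hstep := sub_one_le_mul_one_sub_inv_pow (k := k) (s := n + 2) (hx n).le (by positivity)
    (by linarith)
  rw [prod_range_succ]
  linarith [mul_le_mul_of_nonneg_left hstep (hprod_pos n).le]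

lemma ae_summable_of_summable_integral {Ω : Type*} [MeasurableSpace Ω] {P : Measure Ω}
    {F : ℕ → Ω → ℝ} (hF : ∀ n, Integrable (F n) P) (hF_nonneg : ∀ n, 0 ≤ᵐ[P] F n)
    (hsum : Summable fun n => ∫ ω, F n ω ∂P) : ∀ᵐ ω ∂P, Summable fun n => F n ω := by
  have hmeas : ∀ n, AEMeasurable (fun ω => ENNReal.ofReal (F n ω)) P := fun n =>
    (hF n).aemeasurable.ennreal_ofReal
  have hfinite : ∫⁻ ω, ∑' n, ENNReal.ofReal (F n ω) ∂P ≠ ⊤ := by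
    rw [lintegral_tsum hmeas]
    simp_rw [← ofReal_integral_eq_lintegral_ofReal (hF _) (hF_nonneg _)]
    exact hsum.tsum_ofReal_ne_top
  filter_upwards [ae_lt_top' (AEMeasurable.tsum hmeas) hfinite,
    ae_all_iff.2 hF_nonneg] with ω hω hω_nonneg
  simpa only [ENNReal.toReal_ofReal (hω_nonneg _)] using ENNReal.summable_toReal hω.ne

lemma ae_eventually_mul_le_sum_of_lt_integral {Ω : Type*} [MeasurableSpace Ω] {P : Measure Ω}
    {ξ : ℕ → Ω → ℝ} (hint : Integrable (ξ 0) P) (hindep : Pairwise fun i j => IndepFun (ξ i) (ξ j) P)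
    (hident : ∀ i, IdentDistrib (ξ i) (ξ 0) P P) {a : ℝ} (ha : a < ∫ ω, ξ 0 ω ∂P) :
    ∀ᵐ ω ∂P, ∀ᶠ n : ℕ in atTop, a * n ≤ ∑ i ∈ range n, ξ i ω := by
  filter_upwards [strong_law_ae_real ξ hint hindep hident] with ω hω
  filter_upwards [hω.eventually (eventually_gt_nhds ha), eventually_gt_atTop 0] with n hn hn0
  exact ((lt_div_iff₀ (by positivity)).1 hn).le

theorem tbrw_exit_time_infinite_of_lt_mean_general
    {Ω : Type*} [MeasurableSpace Ω] (P : Measure Ω) [IsProbabilityMeasure P]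
    (ξ : ℕ → Ω → ℝ) (hmeas : ∀ j, Measurable (ξ j)) (hnonneg : ∀ j ω, 0 ≤ ξ j ω)
    (hindep : iIndepFun ξ P)
    (hident : ∀ j, IdentDistrib (ξ j) (ξ 0) P P)
    (hint : Integrable (ξ 0) P)
    (μ : ℝ) (hμ : μ = ∫ ω, ξ 0 ω ∂P)
    (k : ℕ) (hkμ : (k : ℝ) < μ) :
    ∀ d : ℕ, 2 ≤ d →
      ¬ Summable (fun n => ∫ ω, ∏ i ∈ Finset.range n,
        (1 - 1 / ((d : ℝ) + ∑ j ∈ Finset.range i, ξ j ω)) ^ k ∂P) := by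
  intro d hd hsum
  have hd' : (2 : ℝ) ≤ d := by exact_mod_cast hd
  have hx : ∀ i ω, 1 < (d : ℝ) + ∑ j ∈ range i, ξ j ω := fun i ω => by
    linarith [sum_nonneg fun j (_ : j ∈ range i) => hnonneg j ω]
  have hfactor : ∀ i ω, 0 ≤ 1 - 1 / ((d : ℝ) + ∑ j ∈ range i, ξ j ω) ∧
      1 - 1 / ((d : ℝ) + ∑ j ∈ range i, ξ j ω) ≤ 1 := fun i ω =>
    ⟨sub_nonneg.2 (div_le_one_of_le₀ (hx i ω).le (by linarith [hx i ω])),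
      sub_le_self _ (one_div_nonneg.2 (by linarith [hx i ω]))⟩
  set F : ℕ → Ω → ℝ := fun n ω => ∏ i ∈ range n,
    (1 - 1 / ((d : ℝ) + ∑ j ∈ range i, ξ j ω)) ^ k
  have hF_nonneg : ∀ n ω, 0 ≤ F n ω := fun n ω =>
    prod_nonneg fun i _ => pow_nonneg (hfactor i ω).1 k
  have hF_int : ∀ n, Integrable (F n) P := fun n =>
    .of_bound (by fun_prop) 1 (ae_of_all _ fun ω => by
      rw [Real.norm_of_nonneg (hF_nonneg n ω)]
      exact prod_le_one (fun i _ => pow_nonneg (hfactor i ω).1 k)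
        fun i _ => pow_le_one₀ (hfactor i ω).1 (hfactor i ω).2)
  have hsummable := ae_summable_of_summable_integral hF_int
    (fun n => ae_of_all _ (hF_nonneg n)) hsum
  have hgrowth := ae_eventually_mul_le_sum_of_lt_integral hint
    (fun i j hij => hindep.indepFun hij) hident (a := (k + μ) / 2) (by linarith)
  obtain ⟨ω, hsummable_ω, hgrowth_ω⟩ := (hsummable.and hgrowth).exists
  exact not_summable_prod_one_sub_inv_pow (by linarith : (k : ℝ) < (k + μ) / 2) (hx · ω)
    (hgrowth_ω.mono fun n hn => by linarith) hsummable_ω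

/-- Theorem totti, item (i).
For an i.i.d. nonnegative environment with finite mean `μ` and a positive integer
`k < μ`, the series `∑_{n≥1} E[∏_{i=0}^{n-1} (1 - 1/(d + S_i))^k]` diverges for every
integer `d ≥ 2` (so the expected exit time is infinite). -/
theorem tbrw_exit_time_infinite_of_lt_mean
    {Ω : Type*} [MeasurableSpace Ω] (P : Measure Ω) [IsProbabilityMeasure P]
    (ξ : ℕ → Ω → ℝ) (hmeas : ∀ j, Measurable (ξ j)) (hnonneg : ∀ j ω, 0 ≤ ξ j ω)
    (hindep : iIndepFun ξ P)
    (hident : ∀ j, IdentDistrib (ξ j) (ξ 0) P P)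
    (hint : Integrable (ξ 0) P)
    (μ : ℝ) (hμ : μ = ∫ ω, ξ 0 ω ∂P)
    (k : ℕ) (hk : 1 ≤ k) (hkμ : (k : ℝ) < μ) :
    ∀ d : ℕ, 2 ≤ d →
      ¬ Summable (fun n => ∫ ω, ∏ i ∈ Finset.range n,
        (1 - 1 / ((d : ℝ) + ∑ j ∈ Finset.range i, ξ j ω)) ^ k ∂P) :=
  tbrw_exit_time_infinite_of_lt_mean_general P ξ hmeas hnonneg hindep hident hint μ hμ k hkμ
end

section
/- Let k be a positive integer and let (ξ_j)_{j≥0} be i.i.d. nonnegative real-valued random variables with mean E[ξ_0] = k, and let S_0 = 0, S_n = ξ_0 + ... + ξ_{n-1}. Assume there exists a constant c > 0 such that P( |S_n/n - k| > k/(2 log n) ) ≤ exp( -c n / (log n)^2 ) for every integer n ≥ 2. Then for every integer d ≥ 2, ∑_{n≥1} E[ ∏_{i=0}^{n-1} (1 - 1/(d + S_i))^k ] = ∞. -/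
/-!
On the event that `|S_i / i - k| ≤ k / (2 log i)` for all `N ≤ i < n`, every factor satisfies
`(1 - 1/(d + S_i))^k ≥ exp (-(1/i + 1/(i log i) + 8k/i²))`. Since `1/i + 1/(i log i)` is at most
the increment of `log i + log (log i)`, the product is at least a constant times `1/(n log n)`.
The moderate deviation bounds are summable, so for `N` large a union bound gives this event
probability at least `1/2`, uniformly in `n`. Hence the `n`-th term of the series is at least a
constant times `1/(n log n)`, and `∑ 1/(n log n)` diverges by Cauchy condensation.
-/

open MeasureTheory Filter Finset ProbabilityTheory Real

theorem Real.exp_neg_sub_two_mul_sq_le_one_sub {x : ℝ} (hx : x ≤ 1 / 2) :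
    exp (-x - 2 * x ^ 2) ≤ 1 - x := by
  have hpos : 0 < 1 - x := by linarith
  have hinv : (1 - x)⁻¹ ≤ 1 + x + 2 * x ^ 2 := by
    rw [inv_le_iff_one_le_mul₀ hpos]; nlinarith
  calc exp (-x - 2 * x ^ 2) ≤ exp (log (1 - x)) := by
        gcongr; linarith [one_sub_inv_le_log_of_pos hpos]
    _ = 1 - x := exp_log hpos

theorem Real.inv_le_log_sub_log_sub_one {r : ℝ} (hr : 1 < r) :
    r⁻¹ ≤ log r - log (r - 1) := by
  have h := log_le_sub_one_of_pos (x := (r - 1) / r) (by apply div_pos <;> linarith)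
  rw [log_div (by linarith) (by linarith), sub_div, div_self (by linarith)] at h
  linarith [inv_eq_one_div r]

theorem Real.inv_mul_log_le_log_log_sub {r : ℝ} (hr : 2 < r) :
    (r * log r)⁻¹ ≤ log (log r) - log (log (r - 1)) := by
  have hlr : 0 < log r := log_pos (by linarith)
  have hlr' : 0 < log (r - 1) := log_pos (by linarith)
  have h := log_le_sub_one_of_pos (div_pos hlr' hlr)
  rw [log_div hlr'.ne' hlr.ne', div_sub_one hlr.ne'] at h
  have hstep := inv_le_log_sub_log_sub_one (r := r) (by linarith)
  calc (r * log r)⁻¹ = r⁻¹ / log r := by rw [mul_inv, div_eq_mul_inv]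
    _ ≤ (log r - log (r - 1)) / log r := by gcongr
    _ ≤ log (log r) - log (log (r - 1)) := by
        have : (log (r - 1) - log r) / log r = -((log r - log (r - 1)) / log r) := by ring
        linarith

theorem Real.sum_Ico_inv_add_inv_mul_log_le {N n : ℕ} (hN : 4 ≤ N) (hn : N ≤ n) :
    ∑ i ∈ Ico N n, ((i : ℝ)⁻¹ + (i * log i)⁻¹) ≤ log n + log (log n) := by
  set φ : ℝ → ℝ := fun r => log r + log (log r)
  have hN' : (4 : ℝ) ≤ N := by exact_mod_cast hN
  have hn' : (4 : ℝ) ≤ n := hN'.trans (by exact_mod_cast hn)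
  calc ∑ i ∈ Ico N n, ((i : ℝ)⁻¹ + (i * log i)⁻¹)
      ≤ ∑ i ∈ Ico N n, (φ (((i + 1 : ℕ) : ℝ) - 1) - φ ((i : ℝ) - 1)) := by
        refine sum_le_sum fun i hi => ?_
        have hi : (4 : ℝ) ≤ i := hN'.trans (by exact_mod_cast (mem_Ico.1 hi).1)
        push_cast
        simp only [φ, add_sub_cancel_right]
        linarith [inv_le_log_sub_log_sub_one (r := i) (by linarith),
          inv_mul_log_le_log_log_sub (r := i) (by linarith)]
    _ = φ (n - 1) - φ (N - 1) := by
        rw [sum_Ico_sub (fun i : ℕ => φ ((i : ℝ) - 1)) hn]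
    _ ≤ φ n := by
        have hlog : log ((n : ℝ) - 1) ≤ log n := log_le_log (by linarith) (by linarith)
        have hlogN : 1 ≤ log ((N : ℝ) - 1) := by
          rw [le_log_iff_exp_le (by linarith)]; linarith [exp_one_lt_three]
        simp only [φ]
        linarith [log_le_log (log_pos (by linarith)) hlog, log_nonneg hlogN]

theorem Real.not_summable_one_div_mul_log : ¬Summable fun n : ℕ => 1 / (n * log n) := by
  rw [← summable_condensed_iff_of_eventually_nonneg]
  · simp only [Nat.cast_pow, Nat.cast_ofNat, log_pow]
    have h : (fun k : ℕ => (2 : ℝ) ^ k * (1 / (2 ^ k * (k * log 2))))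
        = fun k : ℕ => (log 2)⁻¹ * (1 / (k : ℝ)) := by
      funext k
      rw [mul_one_div, div_mul_cancel_left₀ (by positivity), mul_inv, mul_comm, one_div]
    rw [h, summable_mul_left_iff (inv_ne_zero (log_pos one_lt_two).ne')]
    exact not_summable_one_div_natCast
  · exact Eventually.of_forall fun n => show (0 : ℝ) ≤ _ by positivity
  · filter_upwards [eventually_ge_atTop 2] with n hn
    have hn' : (2 : ℝ) ≤ n := by exact_mod_cast hn
    apply one_div_le_one_div_of_le (mul_pos (by linarith) (log_pos (by linarith)))
    push_cast
    gcongr <;> linarith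

theorem Real.exp_neg_le_one_sub_one_div_pow {k : ℕ} (hk : 1 ≤ k) {r D : ℝ} (hr : exp 1 ≤ r)
    (hD : 2 ≤ D) (hrD : r * (k - k / (2 * log r)) ≤ D) :
    exp (-(r⁻¹ + (r * log r)⁻¹ + 8 * k / r ^ 2)) ≤ (1 - 1 / D) ^ k := by
  have hr₀ : 0 < r := (exp_pos 1).trans_le hr
  have hL : 1 ≤ log r := (le_log_iff_exp_le hr₀).2 hr
  have hk' : (1 : ℝ) ≤ k := by exact_mod_cast hk
  have hrD' : r * k * (2 * log r - 1) / (2 * log r) ≤ D := by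
    convert hrD using 1; field_simp
  have hm₀ : 0 < r * k * (2 * log r - 1) := by
    have : 0 < 2 * log r - 1 := by linarith
    positivity
  have hmul : k * (1 / D) ≤ r⁻¹ + (r * log r)⁻¹ := by
    calc k * (1 / D) ≤ k * (1 / (r * k * (2 * log r - 1) / (2 * log r))) := by gcongr
      _ ≤ r⁻¹ + (r * log r)⁻¹ := by
        rw [mul_one_div, div_div_eq_mul_div, div_le_iff₀ hm₀]
        field_simp
        nlinarith
  have hsq : 1 / D ≤ 2 / r := by
    rw [div_le_div_iff₀ (by linarith) hr₀]
    rw [div_le_iff₀ (by positivity)] at hrD'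
    have h2L : 0 ≤ 2 * log r - 1 := by linarith
    have : r * log r ≤ 2 * D * log r := by
      nlinarith [mul_le_mul_of_nonneg_right (mul_le_mul_of_nonneg_left hk' hr₀.le) h2L]
    nlinarith [le_of_mul_le_mul_right this (by linarith : 0 < log r)]
  calc exp (-(r⁻¹ + (r * log r)⁻¹ + 8 * k / r ^ 2))
      ≤ exp (-(k * (1 / D) + 2 * k * (1 / D) ^ 2)) := by
        gcongr
        calc 2 * k * (1 / D) ^ 2 ≤ 2 * k * (2 / r) ^ 2 := by gcongr
          _ = 8 * k / r ^ 2 := by ring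
    _ = exp (-(1 / D) - 2 * (1 / D) ^ 2) ^ k := by rw [← exp_nat_mul]; ring_nf
    _ ≤ (1 - 1 / D) ^ k := by
        gcongr
        exact exp_neg_sub_two_mul_sq_le_one_sub (by rw [div_le_div_iff₀] <;> linarith)

theorem prod_one_sub_one_div_pow_ge {k N n : ℕ} (hk : 1 ≤ k) (hN : 4 ≤ N) (hn : N ≤ n)
    {s : ℕ → ℝ} (hs : ∀ i, 2 ≤ s i)
    (hgood : ∀ i ∈ Ico N n, i * (k - k / (2 * log i)) ≤ s i) :
    (1 / 2) ^ (k * N) * exp (-(8 * k * ∑' i : ℕ, 1 / (i : ℝ) ^ 2)) / (n * log n) ≤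
      ∏ i ∈ range n, (1 - 1 / s i) ^ k := by
  have hfactor : ∀ i, 1 / 2 ≤ 1 - 1 / s i := fun i => by
    linarith [one_div_le_one_div_of_le two_pos (hs i)]
  have hn' : (4 : ℝ) ≤ n := by exact_mod_cast hN.trans hn
  have hlogn : 0 < log n := log_pos (by linarith)
  have hhead : (1 / 2 : ℝ) ^ (k * N) ≤ ∏ i ∈ range N, (1 - 1 / s i) ^ k := by
    calc (1 / 2 : ℝ) ^ (k * N) = ∏ _i ∈ range N, (1 / 2 : ℝ) ^ k := by
          rw [prod_const, card_range, pow_mul]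
      _ ≤ ∏ i ∈ range N, (1 - 1 / s i) ^ k :=
          prod_le_prod (fun _ _ => by positivity) fun i _ =>
            pow_le_pow_left₀ (by norm_num) (hfactor i) k
  set a : ℕ → ℝ := fun i => (i : ℝ)⁻¹ + (i * log i)⁻¹ + 8 * k / (i : ℝ) ^ 2
  have hsum : ∑ i ∈ Ico N n, a i ≤
      log n + log (log n) + 8 * k * ∑' i : ℕ, 1 / (i : ℝ) ^ 2 := by
    rw [sum_add_distrib]
    simp only [← mul_one_div (8 * (k : ℝ)), ← mul_sum]
    exact add_le_add (sum_Ico_inv_add_inv_mul_log_le hN hn)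
      (mul_le_mul_of_nonneg_left (Summable.sum_le_tsum _ (fun _ _ => by positivity)
        (summable_one_div_nat_pow.2 one_lt_two)) (by positivity))
  have htail : exp (-(8 * k * ∑' i : ℕ, 1 / (i : ℝ) ^ 2)) / (n * log n) ≤
      ∏ i ∈ Ico N n, (1 - 1 / s i) ^ k := by
    calc exp (-(8 * k * ∑' i : ℕ, 1 / (i : ℝ) ^ 2)) / (n * log n)
        = exp (-(log n + log (log n) + 8 * k * ∑' i : ℕ, 1 / (i : ℝ) ^ 2)) := by
          rw [neg_add, neg_add, exp_add, exp_add, exp_neg (log n), exp_log (by linarith),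
            exp_neg (log (log n)), exp_log hlogn]
          ring
      _ ≤ exp (-∑ i ∈ Ico N n, a i) := exp_le_exp.2 (neg_le_neg hsum)
      _ = ∏ i ∈ Ico N n, exp (-a i) := by
          rw [← exp_sum, sum_neg_distrib]
      _ ≤ ∏ i ∈ Ico N n, (1 - 1 / s i) ^ k := by
          refine prod_le_prod (fun _ _ => (exp_pos _).le) fun i hi => ?_
          have hi₄ : (4 : ℝ) ≤ i := by exact_mod_cast hN.trans (mem_Ico.1 hi).1
          exact exp_neg_le_one_sub_one_div_pow hk (by linarith [exp_one_lt_three]) (hs i)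
            (hgood i hi)
  rw [← prod_range_mul_prod_Ico _ hn, mul_div_assoc]
  exact mul_le_mul hhead htail (by positivity)
    (prod_nonneg fun i _ => pow_nonneg (by linarith [hfactor i]) k)

theorem prod_one_sub_one_div_pow_mem_Icc {ι : Type*} (t : Finset ι) (k : ℕ) {s : ι → ℝ}
    (hs : ∀ i ∈ t, 1 ≤ s i) : ∏ i ∈ t, (1 - 1 / s i) ^ k ∈ Set.Icc 0 1 := by
  have hfactor : ∀ i ∈ t, 0 ≤ 1 - 1 / s i ∧ 1 - 1 / s i ≤ 1 := fun i hi =>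
    ⟨sub_nonneg.2 (div_le_one_of_le₀ (hs i hi) (by linarith [hs i hi])),
      sub_le_self _ (one_div_nonneg.2 (by linarith [hs i hi]))⟩
  exact ⟨prod_nonneg fun i hi => pow_nonneg (hfactor i hi).1 k,
    prod_le_one (fun i hi => pow_nonneg (hfactor i hi).1 k)
      fun i hi => pow_le_one₀ (hfactor i hi).1 (hfactor i hi).2⟩

theorem integrable_prod_one_sub_one_div_pow {Ω : Type*} [MeasurableSpace Ω] (P : Measure Ω)
    [IsFiniteMeasure P] {ξ : ℕ → Ω → ℝ} (hmeas : ∀ j, Measurable (ξ j))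
    (hnonneg : ∀ j ω, 0 ≤ ξ j ω) {d : ℝ} (hd : 1 ≤ d) (k n : ℕ) :
    Integrable (fun ω => ∏ i ∈ range n, (1 - 1 / (d + ∑ j ∈ range i, ξ j ω)) ^ k) P := by
  refine Integrable.of_bound (by fun_prop : Measurable _).aestronglyMeasurable 1
    (Eventually.of_forall fun ω => ?_)
  have hmem := prod_one_sub_one_div_pow_mem_Icc (range n) k
    (s := fun i => d + ∑ j ∈ range i, ξ j ω) fun i _ => by linarith [sum_nonneg fun j (_ : j ∈ range i) => hnonneg j ω]
  rw [norm_of_nonneg hmem.1]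
  exact hmem.2

theorem Real.summable_exp_neg_mul_div_log_sq {c : ℝ} (hc : 0 < c) :
    Summable fun i : ℕ => exp (-c * i / log i ^ 2) := by
  refine summable_of_isBigO_nat (summable_one_div_nat_pow.2 one_lt_two)
    (Asymptotics.IsBigO.of_bound 1 ?_)
  have hlog : ∀ᶠ x : ℝ in atTop, ‖log x ^ 3‖ ≤ c / 2 * ‖x‖ :=
    (isLittleO_pow_log_id_atTop (n := 3)).def (by positivity)
  filter_upwards [tendsto_natCast_atTop_atTop.eventually hlog, eventually_ge_atTop 3]
    with i hi hi3
  have hi3' : (3 : ℝ) ≤ i := by exact_mod_cast hi3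
  have hL : 0 < log i := log_pos (by linarith)
  rw [norm_of_nonneg (by positivity), norm_of_nonneg (by positivity)] at hi
  have hexp : -c * i / log i ^ 2 ≤ -(2 * log i) := by
    rw [div_le_iff₀ (by positivity)]
    nlinarith
  rw [one_mul, norm_of_nonneg (exp_pos _).le, norm_of_nonneg (by positivity)]
  calc exp (-c * i / log i ^ 2) ≤ exp (-(2 * log i)) := exp_le_exp.2 hexp
    _ = 1 / (i : ℝ) ^ 2 := by
        rw [show 2 * log (i : ℝ) = log ((i : ℝ) ^ 2) by rw [log_pow]; norm_num, exp_neg,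
          exp_log (by positivity), one_div]

theorem Summable.exists_forall_sum_Ico_le {g : ℕ → ℝ} (hg : Summable g) {ε : ℝ}
    (hε : 0 < ε) (N₀ : ℕ) : ∃ N ≥ N₀, ∀ n, ∑ i ∈ Ico N n, g i ≤ ε := by
  obtain ⟨s, hs⟩ := hg.vanishing (Iic_mem_nhds hε)
  refine ⟨max N₀ (s.sup id + 1), le_max_left _ _, fun n => hs _ ?_⟩
  refine disjoint_left.2 fun i hi his => ?_
  have := (le_max_right _ _).trans (mem_Ico.1 hi).1
  have := le_sup (f := id) his
  simp only [id] at this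
  omega

theorem MeasureTheory.one_sub_sum_measureReal_compl_le_measureReal_biInter {Ω ι : Type*}
    [MeasurableSpace Ω] (P : Measure Ω) [IsProbabilityMeasure P] (s : Finset ι)
    (A : ι → Set Ω) : 1 - ∑ i ∈ s, P.real (A i)ᶜ ≤ P.real (⋂ i ∈ s, A i) := by
  have hcompl : (⋂ i ∈ s, A i)ᶜ = ⋃ i ∈ s, (A i)ᶜ := by simp only [Set.compl_iInter]
  have hunion := measureReal_union_le (μ := P) (⋂ i ∈ s, A i) (⋂ i ∈ s, A i)ᶜ
  rw [Set.union_compl_self, probReal_univ, hcompl] at hunion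
  linarith [measureReal_biUnion_finset_le (μ := P) s fun i => (A i)ᶜ]

theorem MeasureTheory.mul_measureReal_le_integral_of_forall_mem_le {Ω : Type*}
    [MeasurableSpace Ω] {P : Measure Ω} [IsFiniteMeasure P] {F : Ω → ℝ} (hF : 0 ≤ F)
    (hFi : Integrable F P) {G : Set Ω} {C : ℝ} (hC : 0 ≤ C) (hG : ∀ ω ∈ G, C ≤ F ω) :
    C * P.real G ≤ ∫ ω, F ω ∂P :=
  calc C * P.real G ≤ C * P.real {ω | C ≤ F ω} :=
        mul_le_mul_of_nonneg_left (measureReal_mono hG) hC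
    _ ≤ ∫ ω, F ω ∂P := mul_meas_ge_le_integral_of_nonneg (Eventually.of_forall hF) hFi C

theorem not_summable_of_eventually_const_mul_le {f g : ℕ → ℝ} (hg : ¬Summable g)
    (hg₀ : ∀ n, 0 ≤ g n) {C : ℝ} (hC : 0 < C) (hgf : ∀ᶠ n in atTop, C * g n ≤ f n) :
    ¬Summable f := fun hf => hg <| summable_of_isBigO_nat hf <|
  Asymptotics.IsBigO.of_bound C⁻¹ <| hgf.mono fun n hn => by
    rw [norm_of_nonneg (hg₀ n), norm_of_nonneg ((mul_nonneg hC.le (hg₀ n)).trans hn),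
      ← div_eq_inv_mul, le_div_iff₀ hC, mul_comm]
    exact hn

theorem tbrw_exit_time_infinite_critical_general
    {Ω : Type*} [MeasurableSpace Ω] (P : Measure Ω) [IsProbabilityMeasure P]
    (k : ℕ) (hk : 1 ≤ k)
    (ξ : ℕ → Ω → ℝ) (hmeas : ∀ j, Measurable (ξ j)) (hnonneg : ∀ j ω, 0 ≤ ξ j ω)
    (c : ℝ) (hc : 0 < c)
    (hMD : ∀ n : ℕ, 2 ≤ n →
      P {ω | (k : ℝ) / (2 * Real.log n) <
          |(∑ j ∈ Finset.range n, ξ j ω) / (n : ℝ) - (k : ℝ)|}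
        ≤ ENNReal.ofReal (Real.exp (-c * (n : ℝ) / (Real.log n) ^ 2))) :
    ∀ d : ℕ, 2 ≤ d →
      ¬ Summable (fun n => ∫ ω, ∏ i ∈ Finset.range n,
        (1 - 1 / ((d : ℝ) + ∑ j ∈ Finset.range i, ξ j ω)) ^ k ∂P) := by
  intro d hd
  set S : ℕ → Ω → ℝ := fun i ω => ∑ j ∈ range i, ξ j ω
  have hd' : (2 : ℝ) ≤ d := by exact_mod_cast hd
  have hden : ∀ i ω, 2 ≤ (d : ℝ) + S i ω := fun i ω => by
    linarith [sum_nonneg fun j (_ : j ∈ range i) => hnonneg j ω]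
  obtain ⟨N, hN, htail⟩ :=
    (summable_exp_neg_mul_div_log_sq hc).exists_forall_sum_Ico_le one_half_pos 4
  set G : ℕ → Set Ω := fun n => ⋂ i ∈ Ico N n, {ω | |S i ω / i - k| ≤ k / (2 * log i)}
  have hG : ∀ n, 1 / 2 ≤ P.real (G n) := fun n => by
    refine le_trans ?_ (one_sub_sum_measureReal_compl_le_measureReal_biInter P _ _)
    have hbad : ∀ i ∈ Ico N n, P.real {ω | |S i ω / i - k| ≤ k / (2 * log i)}ᶜ ≤
        exp (-c * i / log i ^ 2) := fun i hi => by
      simp only [Set.compl_ofPred, not_le]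
      exact ENNReal.toReal_le_of_le_ofReal (exp_pos _).le (hMD i (by linarith [mem_Ico.1 hi]))
    linarith [sum_le_sum hbad, htail n]
  set A : ℝ := (1 / 2) ^ (k * N) * exp (-(8 * k * ∑' i : ℕ, 1 / (i : ℝ) ^ 2))
  have hprod : ∀ n ≥ N, ∀ ω ∈ G n,
      A * (1 / (n * log n)) ≤ ∏ i ∈ range n, (1 - 1 / ((d : ℝ) + S i ω)) ^ k := by
    refine fun n hn ω hω => mul_one_div A _ ▸
      prod_one_sub_one_div_pow_ge hk hN hn (hden · ω) fun i hi => ?_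
    have hi₀ : (0 : ℝ) < i := by exact_mod_cast (by linarith [mem_Ico.1 hi] : 0 < i)
    have hgood : |S i ω / i - k| ≤ k / (2 * log i) := Set.mem_iInter₂.1 hω i hi
    have : (i : ℝ) * (k - k / (2 * log i)) ≤ S i ω :=
      (le_div_iff₀' hi₀).1 (by linarith [(abs_le.1 hgood).1])
    linarith
  refine not_summable_of_eventually_const_mul_le not_summable_one_div_mul_log
    (fun n => by positivity) (C := A / 2) (by positivity) ?_
  filter_upwards [eventually_ge_atTop N] with n hn
  calc A / 2 * (1 / (n * log n)) ≤ A * (1 / (n * log n)) * P.real (G n) := by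
        linarith [mul_le_mul_of_nonneg_left (hG n) (by positivity : 0 ≤ A * (1 / (n * log n)))]
    _ ≤ _ := mul_measureReal_le_integral_of_forall_mem_le
        (fun ω => (prod_one_sub_one_div_pow_mem_Icc _ k fun i _ => by linarith [hden i ω]).1)
        (integrable_prod_one_sub_one_div_pow P hmeas hnonneg (by linarith) k n)
        (by positivity) (hprod n hn)

/-- Theorem totti, item (i*), critical case `k = μ`.
For an i.i.d. nonnegative environment with mean exactly `k`, if the partial sums
satisfy the moderate deviation bound
`P(|S_n/n - k| > k/(2 log n)) ≤ exp(-c n / (log n)²)` for all `n ≥ 2`,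
then the series `∑_{n≥1} E[∏_{i=0}^{n-1} (1 - 1/(d + S_i))^k]` diverges for every
integer `d ≥ 2`. -/
theorem tbrw_exit_time_infinite_critical
    {Ω : Type*} [MeasurableSpace Ω] (P : Measure Ω) [IsProbabilityMeasure P]
    (k : ℕ) (hk : 1 ≤ k)
    (ξ : ℕ → Ω → ℝ) (hmeas : ∀ j, Measurable (ξ j)) (hnonneg : ∀ j ω, 0 ≤ ξ j ω)
    (hindep : iIndepFun ξ P)
    (hident : ∀ j, IdentDistrib (ξ j) (ξ 0) P P)
    (hint : Integrable (ξ 0) P)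
    (hmean : ∫ ω, ξ 0 ω ∂P = (k : ℝ))
    (c : ℝ) (hc : 0 < c)
    (hMD : ∀ n : ℕ, 2 ≤ n →
      P {ω | (k : ℝ) / (2 * Real.log n) <
          |(∑ j ∈ Finset.range n, ξ j ω) / (n : ℝ) - (k : ℝ)|}
        ≤ ENNReal.ofReal (Real.exp (-c * (n : ℝ) / (Real.log n) ^ 2))) :
    ∀ d : ℕ, 2 ≤ d →
      ¬ Summable (fun n => ∫ ω, ∏ i ∈ Finset.range n,
        (1 - 1 / ((d : ℝ) + ∑ j ∈ Finset.range i, ξ j ω)) ^ k ∂P) :=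
  tbrw_exit_time_infinite_critical_general P k hk ξ hmeas hnonneg c hc hMD
end

section
/- Let (ξ_j)_{j≥0} be i.i.d. nonnegative real-valued random variables with mean μ = E[ξ_0] > 0 and E[ξ_0^{2+ε}] < ∞ for some ε > 0, and let S_0 = 0, S_n = ξ_0 + ... + ξ_{n-1}. If k is a positive integer with k > μ, then there exists a constant C < ∞, depending only on k, ε and the law of ξ_0, such that for every integer d ≥ 2, ∑_{n≥1} E[ ∏_{i=0}^{n-1} (1 - 1/(d + S_i))^k ] ≤ C d. -/
/-!
With `t = 1 / x` and `δ = 2 (1 - exp (-(k - μ) / 2)) > 0`, convexity of `exp` gives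
`(1 - t) ^ k (1 + μ t) ≤ exp (-(k - μ) t) ≤ 1 - δ t` on `[0, 1/2]`, so `V x = x / δ` is a
supersolution: `1 + (1 - 1/x) ^ k E[V (x + ξ₀)] ≤ V x` for `x ≥ 2`. Conditioning on `ξ₀`, which is
independent of the shifted sequence `(ξ_{j+1})`, itself i.i.d. with the same law, the truncated
sums `∑_{p<N} E[∏_{i<p} (1 - 1/(x + S_i)) ^ k]` obey the same recursion and are bounded by `V x`
by induction on `N`.
-/

open MeasureTheory ProbabilityTheory Finset
open scoped ENNReal

lemma sum_range_succ_prod_partialSum {R : Type*} [CommSemiring R] (g : ℝ → R) (x : ℝ)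
    (s : ℕ → ℝ) (N : ℕ) :
    ∑ p ∈ range (N + 1), ∏ i ∈ range p, g (x + ∑ j ∈ range i, s j) =
      1 + g x * ∑ p ∈ range N, ∏ i ∈ range p, g ((x + s 0) + ∑ j ∈ range i, s (j + 1)) := by
  rw [sum_range_succ', prod_range_zero, add_comm, mul_sum]
  congr 1
  refine sum_congr rfl fun p _ => ?_
  rw [prod_range_succ', sum_range_zero, add_zero, mul_comm]
  congr 1
  refine prod_congr rfl fun i _ => ?_
  rw [sum_range_succ']
  ring_nf

namespace ProbabilityTheory

variable {Ω α β : Type*} [MeasurableSpace Ω] [MeasurableSpace α] [MeasurableSpace β]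
  {P : Measure Ω}

lemma iIndepFun.indepFun_zero_succ {f : ℕ → Ω → β} (hf : iIndepFun f P)
    (hmeas : ∀ n, Measurable (f n)) :
    IndepFun (f 0) (fun ω n => f (n + 1) ω) P := by
  rw [IndepFun_iff_Indep]
  have h := indep_iSup_of_disjoint (fun n => (hmeas n).comap_le) ((iIndepFun_iff_iIndep _ _ _).1 hf)
    (S := {0}) (T := Set.Ioi 0) (by simp)
  refine indep_of_indep_of_le h ?_ ?_
  · exact le_iSup₂ (f := fun n (_ : n ∈ ({0} : Set ℕ)) => MeasurableSpace.comap (f n) _) 0 rfl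
  · rw [MeasurableSpace.pi, MeasurableSpace.comap_iSup]
    refine iSup_le fun n => ?_
    rw [MeasurableSpace.comap_comp]
    exact le_iSup₂ (f := fun n (_ : n ∈ Set.Ioi 0) => MeasurableSpace.comap (f n) _) (n + 1)
      n.succ_pos

lemma IndepFun.lintegral_comp_prodMk [IsFiniteMeasure P] {X : Ω → α} {Y : Ω → β}
    (hXY : IndepFun X Y P) (hX : Measurable X) (hY : Measurable Y) {F : α × β → ℝ≥0∞}
    (hF : Measurable F) :
    ∫⁻ ω, F (X ω, Y ω) ∂P = ∫⁻ x, ∫⁻ ω, F (x, Y ω) ∂P ∂(P.map X) := by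
  rw [← lintegral_map hF (hX.prodMk hY),
    (indepFun_iff_map_prod_eq_prod_map_map hX.aemeasurable hY.aemeasurable).1 hXY,
    lintegral_prod _ hF.aemeasurable]
  exact lintegral_congr fun x => lintegral_map (hF.comp measurable_prodMk_left) hY

end ProbabilityTheory

section Supersolution

variable {Ω : Type*} [MeasurableSpace Ω] {P : Measure Ω} [IsProbabilityMeasure P]
  {ν : Measure ℝ} {g V : ℝ → ℝ≥0∞} {a : ℝ}

theorem lintegral_sum_prod_le_of_supersolution (hg : Measurable g) (hν : ∀ᵐ y ∂ν, 0 ≤ y)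
    (hV : ∀ x, a ≤ x → 1 + g x * ∫⁻ y, V (x + y) ∂ν ≤ V x) {ξ : ℕ → Ω → ℝ}
    (hmeas : ∀ j, Measurable (ξ j)) (hindep : iIndepFun ξ P) (hlaw : ∀ j, P.map (ξ j) = ν)
    (N : ℕ) {x : ℝ} (hx : a ≤ x) :
    ∫⁻ ω, ∑ p ∈ range N, ∏ i ∈ range p, g (x + ∑ j ∈ range i, ξ j ω) ∂P ≤ V x := by
  induction N generalizing ξ x with
  | zero => simp
  | succ N ih =>
    let F : ℝ × (ℕ → ℝ) → ℝ≥0∞ := fun z =>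
      ∑ p ∈ range N, ∏ i ∈ range p, g ((x + z.1) + ∑ j ∈ range i, z.2 j)
    have hF : Measurable F := by fun_prop
    have htail : Measurable fun ω j => ξ (j + 1) ω := measurable_pi_lambda _ fun j => hmeas _
    calc ∫⁻ ω, ∑ p ∈ range (N + 1), ∏ i ∈ range p, g (x + ∑ j ∈ range i, ξ j ω) ∂P
        = ∫⁻ ω, 1 + g x * F (ξ 0 ω, fun j => ξ (j + 1) ω) ∂P := by
          simp_rw [sum_range_succ_prod_partialSum]; rfl
      _ = 1 + g x * ∫⁻ y, ∫⁻ ω, F (y, fun j => ξ (j + 1) ω) ∂P ∂ν := by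
          have hFξ : Measurable fun ω => F (ξ 0 ω, fun j => ξ (j + 1) ω) := by fun_prop
          rw [lintegral_add_left measurable_const, lintegral_const_mul _ hFξ,
            (hindep.indepFun_zero_succ hmeas).lintegral_comp_prodMk (hmeas 0) htail hF, hlaw 0]
          simp only [lintegral_const, measure_univ, mul_one]
      _ ≤ 1 + g x * ∫⁻ y, V (x + y) ∂ν := by
          gcongr 1 + g x * ?_
          refine lintegral_mono_ae (hν.mono fun y hy => ?_)
          exact ih (fun j => hmeas _) (hindep.precomp Nat.succ_injective) (fun j => hlaw _)
            (by linarith)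
      _ ≤ V x := hV x hx

theorem tsum_lintegral_prod_le_of_supersolution (hg : Measurable g) (hν : ∀ᵐ y ∂ν, 0 ≤ y)
    (hV : ∀ x, a ≤ x → 1 + g x * ∫⁻ y, V (x + y) ∂ν ≤ V x) {ξ : ℕ → Ω → ℝ}
    (hmeas : ∀ j, Measurable (ξ j)) (hindep : iIndepFun ξ P) (hlaw : ∀ j, P.map (ξ j) = ν)
    {x : ℝ} (hx : a ≤ x) :
    ∑' p, ∫⁻ ω, ∏ i ∈ range p, g (x + ∑ j ∈ range i, ξ j ω) ∂P ≤ V x := by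
  refine ENNReal.tsum_le_of_sum_range_le fun N => ?_
  rw [← lintegral_finsetSum' _ fun p _ => by fun_prop]
  exact lintegral_sum_prod_le_of_supersolution hg hν hV hmeas hindep hlaw N hx

end Supersolution

section Analytic

open Real

lemma one_sub_pow_mul_one_add_le_exp (k : ℕ) {μ t : ℝ} (hμ : 0 ≤ μ) (ht₀ : 0 ≤ t)
    (ht₁ : t ≤ 1) : (1 - t) ^ k * (1 + μ * t) ≤ exp (-((k - μ) * t)) := by
  calc (1 - t) ^ k * (1 + μ * t) ≤ exp (-t) ^ k * exp (μ * t) := by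
        gcongr
        · exact one_sub_le_exp_neg t
        · linarith [add_one_le_exp (μ * t)]
    _ = exp (-((k - μ) * t)) := by rw [← exp_nat_mul, ← exp_add]; ring_nf

lemma exp_neg_mul_le_one_sub_mul (b : ℝ) {t : ℝ} (ht₀ : 0 ≤ t) (ht : t ≤ 1 / 2) :
    exp (-(b * t)) ≤ 1 - 2 * (1 - exp (-(b / 2))) * t := by
  have h := convexOn_exp.2 (Set.mem_univ 0) (Set.mem_univ (-(b / 2)))
    (by linarith : 0 ≤ 1 - 2 * t) (by linarith : 0 ≤ 2 * t) (by ring)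
  simp only [smul_eq_mul, mul_zero, zero_add, exp_zero, mul_one] at h
  rw [show -(b * t) = 2 * t * -(b / 2) by ring]
  linarith

lemma exists_linear_supersolution {k : ℕ} {μ : ℝ} (hμ : 0 ≤ μ) (hkμ : μ < k) :
    ∃ C : ℝ, 0 ≤ C ∧ ∀ x : ℝ, 2 ≤ x → 1 + (1 - 1 / x) ^ k * (C * (x + μ)) ≤ C * x := by
  set δ := 2 * (1 - exp (-((k - μ) / 2)))
  have hδ : 0 < δ := by
    have : exp (-((k - μ) / 2)) < 1 := exp_lt_one_iff.2 (by linarith)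
    linarith
  refine ⟨δ⁻¹, by positivity, fun x hx => ?_⟩
  have hx₀ : 0 < x := by linarith
  have hdecay : (1 - x⁻¹) ^ k * (1 + μ * x⁻¹) ≤ 1 - δ * x⁻¹ :=
    (one_sub_pow_mul_one_add_le_exp k hμ (by positivity)
      (inv_le_one_of_one_le₀ (by linarith))).trans
      (exp_neg_mul_le_one_sub_mul _ (by positivity)
        (by rw [one_div, inv_le_inv₀ hx₀ two_pos]; exact hx))
  calc 1 + (1 - 1 / x) ^ k * (δ⁻¹ * (x + μ))
      = 1 + δ⁻¹ * x * ((1 - x⁻¹) ^ k * (1 + μ * x⁻¹)) := by field_simp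
    _ ≤ 1 + δ⁻¹ * x * (1 - δ * x⁻¹) := by gcongr
    _ = δ⁻¹ * x := by field_simp; ring

end Analytic

lemma lintegral_map_ofReal_mul_add {Ω : Type*} [MeasurableSpace Ω] {P : Measure Ω}
    [IsProbabilityMeasure P] {X : Ω → ℝ} (hX : Measurable X) (hXi : Integrable X P)
    (hX₀ : ∀ ω, 0 ≤ X ω) {C x : ℝ} (hC : 0 ≤ C) (hx : 0 ≤ x) :
    ∫⁻ y, ENNReal.ofReal (C * (x + y)) ∂P.map X = ENNReal.ofReal (C * (x + ∫ ω, X ω ∂P)) := by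
  have hnonneg : ∀ ω, 0 ≤ C * (x + X ω) := fun ω => mul_nonneg hC (add_nonneg hx (hX₀ ω))
  have hint : Integrable (fun ω => C * (x + X ω)) P := ((integrable_const x).add hXi).const_mul C
  rw [lintegral_map (by fun_prop) hX, ← ofReal_integral_eq_lintegral_ofReal hint
    (ae_of_all _ hnonneg), integral_const_mul,
    integral_add (integrable_const x) hXi, integral_const, probReal_univ, one_smul]

theorem tbrw_exit_time_linear_upper_bound_general
    {Ω : Type*} [MeasurableSpace Ω] (P : Measure Ω) [IsProbabilityMeasure P]
    (ξ : ℕ → Ω → ℝ) (hmeas : ∀ j, Measurable (ξ j)) (hnonneg : ∀ j ω, 0 ≤ ξ j ω)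
    (hindep : iIndepFun ξ P)
    (hident : ∀ j, IdentDistrib (ξ j) (ξ 0) P P)
    (hint : Integrable (ξ 0) P)
    (μ : ℝ) (hμ : μ = ∫ ω, ξ 0 ω ∂P)
    (k : ℕ) (hkμ : μ < (k : ℝ)) :
    ∃ C : ℝ, ∀ d : ℕ, 2 ≤ d →
      (∑' n : ℕ, ENNReal.ofReal (∫ ω, ∏ i ∈ Finset.range n,
        (1 - 1 / ((d : ℝ) + ∑ j ∈ Finset.range i, ξ j ω)) ^ k ∂P))
        ≤ ENNReal.ofReal (C * (d : ℝ)) := by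
  have hμ₀ : 0 ≤ μ := hμ ▸ integral_nonneg (hnonneg 0)
  obtain ⟨C, hC₀, hC⟩ := exists_linear_supersolution hμ₀ hkμ
  have hV : ∀ x : ℝ, 2 ≤ x → 1 + ‖1 - 1 / x‖ₑ ^ k *
      ∫⁻ y, ENNReal.ofReal (C * (x + y)) ∂P.map (ξ 0) ≤ ENNReal.ofReal (C * x) := by
    intro x hx
    have hx₁ : 0 ≤ 1 - 1 / x := by
      rw [sub_nonneg, div_le_one (by linarith)]; linarith
    rw [lintegral_map_ofReal_mul_add (hmeas 0) hint (hnonneg 0) hC₀ (by linarith), ← hμ,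
      Real.enorm_of_nonneg hx₁, ← ENNReal.ofReal_pow hx₁, ← ENNReal.ofReal_mul (by positivity),
      ← ENNReal.ofReal_one, ← ENNReal.ofReal_add zero_le_one (by positivity)]
    exact ENNReal.ofReal_le_ofReal (hC x hx)
  refine ⟨C, fun d hd => ?_⟩
  calc ∑' n, ENNReal.ofReal (∫ ω, ∏ i ∈ range n,
        (1 - 1 / ((d : ℝ) + ∑ j ∈ range i, ξ j ω)) ^ k ∂P)
      ≤ ∑' n, ∫⁻ ω, ∏ i ∈ range n, ‖1 - 1 / ((d : ℝ) + ∑ j ∈ range i, ξ j ω)‖ₑ ^ k ∂P := by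
        refine ENNReal.tsum_le_tsum fun n => ?_
        -- `ofReal (∫ f) ≤ ∫⁻ ‖f‖ₑ` holds without any integrability of `f`.
        refine (Real.ofReal_le_enorm _).trans ((enorm_integral_le_lintegral_enorm _).trans ?_)
        simp [enorm, nnnorm_prod]
    _ ≤ ENNReal.ofReal (C * d) :=
        tsum_lintegral_prod_le_of_supersolution (by fun_prop)
          ((ae_map_iff (hmeas 0).aemeasurable measurableSet_Ici).2 (ae_of_all _ (hnonneg 0)))
          hV hmeas hindep (fun j => (hident j).map_eq) (by exact_mod_cast hd)

/-- Theorem totti, item (ii), upper bound.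
For an i.i.d. nonnegative environment with mean `μ > 0`, a finite `(2+ε)`-th moment
and a positive integer `k > μ`, there is a finite constant `C` such that for every
integer `d ≥ 2`, `∑_{n≥1} E[∏_{i=0}^{n-1} (1 - 1/(d + S_i))^k] ≤ C d`. -/
theorem tbrw_exit_time_linear_upper_bound
    {Ω : Type*} [MeasurableSpace Ω] (P : Measure Ω) [IsProbabilityMeasure P]
    (ξ : ℕ → Ω → ℝ) (hmeas : ∀ j, Measurable (ξ j)) (hnonneg : ∀ j ω, 0 ≤ ξ j ω)
    (hindep : iIndepFun ξ P)
    (hident : ∀ j, IdentDistrib (ξ j) (ξ 0) P P)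
    (hint : Integrable (ξ 0) P)
    (μ : ℝ) (hμ : μ = ∫ ω, ξ 0 ω ∂P) (hμpos : 0 < μ)
    (ε : ℝ) (hε : 0 < ε)
    (hmoment : Integrable (fun ω => (ξ 0 ω) ^ ((2 : ℝ) + ε)) P)
    (k : ℕ) (hk : 1 ≤ k) (hkμ : μ < (k : ℝ)) :
    ∃ C : ℝ, ∀ d : ℕ, 2 ≤ d →
      (∑' n : ℕ, ENNReal.ofReal (∫ ω, ∏ i ∈ Finset.range n,
        (1 - 1 / ((d : ℝ) + ∑ j ∈ Finset.range i, ξ j ω)) ^ k ∂P))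
        ≤ ENNReal.ofReal (C * (d : ℝ)) :=
  tbrw_exit_time_linear_upper_bound_general P ξ hmeas hnonneg hindep hident hint μ hμ k hkμ
end

section
/- Let ℓ ≥ 2 be an integer and q ∈ (0,1). Let N be a geometric random variable on {1,2,3,...} with success probability 1/ℓ (so P(N ≥ j) = (1 - 1/ℓ)^{j-1} for j ≥ 1), and, conditionally on N, let W be a binomial random variable with N trials and success probability q. Then for every real a ≥ 1, P( W ≤ a ) ≤ e^{-a/4} + 1 - (1 - 1/ℓ)^{2a/q}. -/
/-!
On the event `N ≤ 2a/q` we pay the geometric probability `1 - (1 - 1/ℓ)^{⌊2a/q⌋}`.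
On the complementary event `W` has at least `2a/q` trials, so its mean is at least `2a`, and
the Chernoff bound `P(Bin(n, q) ≤ k) ≤ 2^k E[2^{-Bin(n,q)}] = 2^k (1 - q/2)^n ≤ e^{k log 2 - nq/2}`
with `k ≤ a ≤ nq/2` gives at most `e^{(log 2 - 1) a} ≤ e^{-a/4}`.
-/

open MeasureTheory Finset Real
open scoped ENNReal

noncomputable def binomialCDF (n : ℕ) (q : ℝ) (k : ℕ) : ℝ :=
  ∑ b ∈ range (k + 1), (n.choose b : ℝ) * q ^ b * (1 - q) ^ (n - b)

section BinomialSums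

variable {x y : ℝ} (hx : 0 ≤ x) (hy : 0 ≤ y) (n : ℕ)
include hx hy

theorem sum_range_choose_mul_pow_mul_pow_le (m : ℕ) :
    ∑ b ∈ range m, (n.choose b : ℝ) * x ^ b * y ^ (n - b) ≤ (x + y) ^ n := by
  have hvanish : ∑ b ∈ range m, (n.choose (n + 1 + b) : ℝ) * x ^ (n + 1 + b) *
      y ^ (n - (n + 1 + b)) = 0 :=
    sum_eq_zero fun b _ ↦ by rw [Nat.choose_eq_zero_of_lt (by omega)]; simp
  calc ∑ b ∈ range m, (n.choose b : ℝ) * x ^ b * y ^ (n - b)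
      ≤ ∑ b ∈ range (n + 1 + m), (n.choose b : ℝ) * x ^ b * y ^ (n - b) :=
        sum_le_sum_of_subset_of_nonneg (range_subset_range.2 (by omega))
          fun _ _ _ ↦ by positivity
    _ = (x + y) ^ n := by
        rw [sum_range_add, hvanish, add_zero, add_pow]
        exact sum_congr rfl fun _ _ ↦ by ring

theorem sum_range_choose_mul_pow_mul_pow_le_two_pow_mul (k : ℕ) :
    ∑ b ∈ range (k + 1), (n.choose b : ℝ) * x ^ b * y ^ (n - b) ≤ 2 ^ k * (x / 2 + y) ^ n := by
  calc ∑ b ∈ range (k + 1), (n.choose b : ℝ) * x ^ b * y ^ (n - b)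
      = ∑ b ∈ range (k + 1), 2 ^ b * ((n.choose b : ℝ) * (x / 2) ^ b * y ^ (n - b)) :=
        sum_congr rfl fun b _ ↦ by rw [div_pow]; field_simp
    _ ≤ ∑ b ∈ range (k + 1), 2 ^ k * ((n.choose b : ℝ) * (x / 2) ^ b * y ^ (n - b)) :=
        sum_le_sum fun b hb ↦ by
          gcongr
          · exact one_le_two
          · exact Nat.lt_succ_iff.1 (mem_range.1 hb)
    _ ≤ 2 ^ k * (x / 2 + y) ^ n := by
        rw [← mul_sum]
        gcongr
        exact sum_range_choose_mul_pow_mul_pow_le (by positivity) hy n _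

end BinomialSums

theorem binomialCDF_le_exp {n k : ℕ} {q a : ℝ} (hq0 : 0 ≤ q) (hq1 : q ≤ 1)
    (hka : k ≤ a) (han : 2 * a ≤ n * q) : binomialCDF n q k ≤ exp (-a / 4) := by
  calc binomialCDF n q k ≤ 2 ^ k * (q / 2 + (1 - q)) ^ n :=
        sum_range_choose_mul_pow_mul_pow_le_two_pow_mul hq0 (sub_nonneg.2 hq1) n k
    _ ≤ exp (log 2) ^ k * exp (-(q / 2)) ^ n := by
        rw [exp_log two_pos]
        gcongr
        linarith [one_sub_le_exp_neg (q / 2)]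
    _ = exp (k * log 2 - n * q / 2) := by
        rw [← exp_nat_mul, ← exp_nat_mul, ← exp_add]
        ring_nf
    _ ≤ exp (-a / 4) := by
        gcongr
        nlinarith [log_two_lt_d9, mul_le_mul_of_nonneg_right hka (log_nonneg one_le_two),
          (Nat.cast_nonneg k).trans hka]

section Mixture

variable {Ω : Type*} [MeasurableSpace Ω] (P : Measure Ω) {N W : Ω → ℕ} {q : ℝ}

theorem tsum_measure_preimage_singleton_eq_measure_univ (hN : Measurable N) :
    ∑' n, P {ω | N ω = n} = P Set.univ := by
  rw [← (Set.iUnion_eq_univ_iff (f := fun n ↦ {ω | N ω = n})).2 fun ω ↦ ⟨N ω, rfl⟩]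
  exact (measure_iUnion (pairwise_disjoint_fiber N) fun n ↦ hN (measurableSet_singleton n)).symm

variable (hbin : ∀ n : ℕ, 1 ≤ n → ∀ b : ℕ,
      P {ω | W ω = b ∧ N ω = n} =
        P {ω | N ω = n} * ENNReal.ofReal ((n.choose b : ℝ) * q ^ b * (1 - q) ^ (n - b)))
include hbin

theorem measure_eq_and_le_le_binomialCDF (hq0 : 0 ≤ q) (hq1 : q ≤ 1) {n : ℕ} (hn : 1 ≤ n)
    (k : ℕ) :
    P {ω | N ω = n ∧ W ω ≤ k} ≤ P {ω | N ω = n} * ENNReal.ofReal (binomialCDF n q k) := by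
  have hcover : {ω | N ω = n ∧ W ω ≤ k} ⊆ ⋃ b ∈ range (k + 1), {ω | W ω = b ∧ N ω = n} :=
    fun ω ⟨hN, hW⟩ ↦ Set.mem_biUnion (mem_range.2 (Nat.lt_succ_of_le hW)) ⟨rfl, hN⟩
  calc P {ω | N ω = n ∧ W ω ≤ k}
      ≤ ∑ b ∈ range (k + 1), P {ω | W ω = b ∧ N ω = n} :=
        (measure_mono hcover).trans (measure_biUnion_finset_le _ _)
    _ = P {ω | N ω = n} * ENNReal.ofReal (binomialCDF n q k) := by
        rw [binomialCDF, ENNReal.ofReal_sum_of_nonneg fun b _ ↦ by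
          have := sub_nonneg.2 hq1; positivity, mul_sum]
        exact sum_congr rfl fun b _ ↦ hbin n hn b

theorem measure_ge_and_le_le_of_binomialCDF_le [IsProbabilityMeasure P] (hN : Measurable N)
    (hq0 : 0 ≤ q) (hq1 : q ≤ 1) {n₀ : ℕ} (hn₀ : 1 ≤ n₀) (k : ℕ) {ε : ℝ}
    (hε : ∀ n, n₀ ≤ n → binomialCDF n q k ≤ ε) :
    P {ω | n₀ ≤ N ω ∧ W ω ≤ k} ≤ ENNReal.ofReal ε := by
  have hfiber (n : ℕ) :
      P {ω | N ω = n ∧ n₀ ≤ n ∧ W ω ≤ k} ≤ P {ω | N ω = n} * ENNReal.ofReal ε := by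
    by_cases hn : n₀ ≤ n
    · calc P {ω | N ω = n ∧ n₀ ≤ n ∧ W ω ≤ k}
          ≤ P {ω | N ω = n ∧ W ω ≤ k} := measure_mono fun ω h ↦ ⟨h.1, h.2.2⟩
        _ ≤ P {ω | N ω = n} * ENNReal.ofReal (binomialCDF n q k) :=
          measure_eq_and_le_le_binomialCDF P hbin hq0 hq1 (hn₀.trans hn) k
        _ ≤ P {ω | N ω = n} * ENNReal.ofReal ε := by gcongr; exact hε n hn
    · simp [hn]
  calc P {ω | n₀ ≤ N ω ∧ W ω ≤ k}
      ≤ ∑' n, P {ω | N ω = n ∧ n₀ ≤ n ∧ W ω ≤ k} :=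
        (measure_mono fun ω h ↦ Set.mem_iUnion.2 ⟨N ω, rfl, h⟩ :
          _ ≤ P (⋃ n, {ω | N ω = n ∧ n₀ ≤ n ∧ W ω ≤ k})).trans (measure_iUnion_le _)
    _ ≤ ∑' n, P {ω | N ω = n} * ENNReal.ofReal ε := ENNReal.tsum_le_tsum hfiber
    _ = ENNReal.ofReal ε := by
        rw [ENNReal.tsum_mul_right, tsum_measure_preimage_singleton_eq_measure_univ P hN,
          measure_univ, one_mul]

end Mixture

theorem geometric_binomial_lower_tail_general
    {Ω : Type*} [MeasurableSpace Ω] (P : Measure Ω) [IsProbabilityMeasure P]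
    (ℓ : ℕ) (q : ℝ) (hq : q ∈ Set.Ioo (0 : ℝ) 1)
    (N W : Ω → ℕ) (hN : Measurable N)
    (hgeo : ∀ j : ℕ, 1 ≤ j →
      P {ω | j ≤ N ω} = ENNReal.ofReal ((1 - 1 / (ℓ : ℝ)) ^ (j - 1)))
    (hbin : ∀ n : ℕ, 1 ≤ n → ∀ b : ℕ,
      P {ω | W ω = b ∧ N ω = n} =
        P {ω | N ω = n} *
          ENNReal.ofReal ((n.choose b : ℝ) * q ^ b * (1 - q) ^ (n - b))) :
    ∀ a : ℝ, 1 ≤ a →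
      P {ω | (W ω : ℝ) ≤ a} ≤
        ENNReal.ofReal (Real.exp (-a / 4) + 1 - (1 - 1 / (ℓ : ℝ)) ^ (2 * a / q)) := by
  intro a ha
  obtain ⟨hq0, hq1⟩ := hq
  set c : ℝ := 1 - 1 / (ℓ : ℝ)
  set m : ℕ := ⌊2 * a / q⌋₊
  have hc0 : 0 ≤ c := by simpa [c] using Nat.cast_inv_le_one (α := ℝ) ℓ
  have hc1 : c ≤ 1 := by simp [c]
  have hcm : c ^ (2 * a / q) ≤ c ^ m := by
    rw [← rpow_natCast]
    exact rpow_le_rpow_of_exponent_ge' hc0 hc1 (Nat.cast_nonneg m) (Nat.floor_le (by positivity))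
  have hsplit : P {ω | (W ω : ℝ) ≤ a} ≤
      P {ω | N ω < m + 1} + P {ω | m + 1 ≤ N ω ∧ W ω ≤ ⌊a⌋₊} :=
    (measure_mono fun ω (hω : (W ω : ℝ) ≤ a) ↦ (lt_or_ge (N ω) (m + 1)).imp id
      fun h ↦ ⟨h, Nat.le_floor hω⟩).trans (measure_union_le _ _)
  have hgeoTail : P {ω | N ω < m + 1} = ENNReal.ofReal (1 - c ^ m) := by
    rw [show {ω | N ω < m + 1} = {ω | m + 1 ≤ N ω}ᶜ by ext; simp,
      measure_compl (s := {ω | m + 1 ≤ N ω}) (hN measurableSet_Ici) (measure_ne_top _ _),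
      measure_univ, hgeo _ le_add_self, Nat.add_sub_cancel, ENNReal.ofReal_sub _ (by positivity),
      ENNReal.ofReal_one]
  have hbinTail : P {ω | m + 1 ≤ N ω ∧ W ω ≤ ⌊a⌋₊} ≤ ENNReal.ofReal (exp (-a / 4)) :=
    measure_ge_and_le_le_of_binomialCDF_le P hbin hN hq0.le hq1.le le_add_self _ fun n hn ↦
      binomialCDF_le_exp hq0.le hq1.le (Nat.floor_le (by linarith)) <| by
        rw [← div_le_iff₀ hq0]
        exact (Nat.lt_floor_add_one _).le.trans (by exact_mod_cast hn)
  calc P {ω | (W ω : ℝ) ≤ a}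
      ≤ ENNReal.ofReal (1 - c ^ m) + ENNReal.ofReal (exp (-a / 4)) := by
        rw [← hgeoTail]; exact hsplit.trans (by gcongr)
    _ = ENNReal.ofReal (1 - c ^ m + exp (-a / 4)) :=
        (ENNReal.ofReal_add (sub_nonneg.2 (pow_le_one₀ (n := m) hc0 hc1)) (exp_nonneg _)).symm
    _ ≤ ENNReal.ofReal (Real.exp (-a / 4) + 1 - c ^ (2 * a / q)) :=
        ENNReal.ofReal_le_ofReal (by linarith)

/-- inequality (ineq:w) in the proof of Lemma 2.1.
Let `N` be geometric on `{1,2,...}` with success probability `1/ℓ` (`ℓ ≥ 2`) and,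
conditionally on `N`, let `W` be binomial with `N` trials and success probability
`q ∈ (0,1)`. Then for every real `a ≥ 1`,
`P(W ≤ a) ≤ e^{-a/4} + 1 - (1 - 1/ℓ)^{2a/q}`. -/
theorem geometric_binomial_lower_tail
    {Ω : Type*} [MeasurableSpace Ω] (P : Measure Ω) [IsProbabilityMeasure P]
    (ℓ : ℕ) (hℓ : 2 ≤ ℓ) (q : ℝ) (hq : q ∈ Set.Ioo (0 : ℝ) 1)
    (N W : Ω → ℕ) (hN : Measurable N) (hW : Measurable W)
    (hN1 : ∀ ω, 1 ≤ N ω)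
    (hgeo : ∀ j : ℕ, 1 ≤ j →
      P {ω | j ≤ N ω} = ENNReal.ofReal ((1 - 1 / (ℓ : ℝ)) ^ (j - 1)))
    (hbin : ∀ n : ℕ, 1 ≤ n → ∀ b : ℕ,
      P {ω | W ω = b ∧ N ω = n} =
        P {ω | N ω = n} *
          ENNReal.ofReal ((n.choose b : ℝ) * q ^ b * (1 - q) ^ (n - b))) :
    ∀ a : ℝ, 1 ≤ a →
      P {ω | (W ω : ℝ) ≤ a} ≤
        ENNReal.ofReal (Real.exp (-a / 4) + 1 - (1 - 1 / (ℓ : ℝ)) ^ (2 * a / q)) :=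
  geometric_binomial_lower_tail_general P ℓ q hq N W hN hgeo hbin
end

section
/- Let δ > 0 and α ∈ (0,1), and let (ξ_j)_{j≥1} be independent nonnegative real-valued random variables such that P(ξ_j > x) ≥ δ x^{-α} for every real x ≥ 1 and every j ≥ 1. Let S_i = ξ_1 + ... + ξ_i. Then for every β ∈ (α, 1), P( liminf_{i→∞} S_i / i^{1/β} ≥ 1 ) = 1. -/
open MeasureTheory Filter Finset ProbabilityTheory
open scoped ENNReal

/-!
Put `x_k = (2^(k+1))^(1/β)`. By independence, the probability that `ξ_0, …, ξ_(2^k - 1)` all stay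
below `x_k` is at most `(1 + δ x_k^(-α))^(-2^k) ≤ (2^k δ x_k^(-α))⁻¹`, which decays geometrically
because `α / β < 1`. By Borel–Cantelli, almost surely for all large `k` some `ξ_j` with `j < 2^k`
exceeds `x_k`; then every `i ∈ [2^k, 2^(k+1))` has `S_i ≥ ξ_j > x_k ≥ i^(1/β)`.
-/

section TailBounds

variable {Ω : Type*} [MeasurableSpace Ω] {P : Measure Ω} [IsProbabilityMeasure P]

lemma measure_le_le_ofReal_inv_one_add {X : Ω → ℝ} (hX : Measurable X) {x t : ℝ} (ht : 0 ≤ t)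
    (htail : ENNReal.ofReal t ≤ P {ω | x < X ω}) :
    P {ω | X ω ≤ x} ≤ ENNReal.ofReal (1 + t)⁻¹ := by
  have hcompl : {ω | X ω ≤ x} = {ω | x < X ω}ᶜ := by ext; simp
  rw [hcompl, prob_compl_eq_one_sub (measurableSet_lt measurable_const hX)]
  calc 1 - P {ω | x < X ω} ≤ 1 - ENNReal.ofReal t := tsub_le_tsub_left htail 1
    _ = ENNReal.ofReal (1 - t) := by rw [ENNReal.ofReal_sub 1 ht, ENNReal.ofReal_one]
    _ ≤ ENNReal.ofReal (1 + t)⁻¹ := ENNReal.ofReal_le_ofReal <| by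
      rw [inv_eq_one_div, le_div_iff₀ (by positivity)]
      nlinarith

lemma ProbabilityTheory.iIndepFun.measure_biInter_le_le_ofReal_inv {ξ : ℕ → Ω → ℝ}
    (hindep : iIndepFun ξ P) (hmeas : ∀ j, Measurable (ξ j)) {x t : ℝ} (ht : 0 ≤ t)
    (htail : ∀ j, ENNReal.ofReal t ≤ P {ω | x < ξ j ω}) (n : ℕ) :
    P (⋂ j ∈ range n, {ω | ξ j ω ≤ x}) ≤ ENNReal.ofReal (1 + n * t)⁻¹ := by
  rw [hindep.meas_biInter (s := fun j => {ω | ξ j ω ≤ x})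
    fun j _ => ⟨Set.Iic x, measurableSet_Iic, rfl⟩]
  calc ∏ j ∈ range n, P {ω | ξ j ω ≤ x}
      ≤ ∏ _j ∈ range n, ENNReal.ofReal (1 + t)⁻¹ :=
        prod_le_prod' fun j _ => measure_le_le_ofReal_inv_one_add (hmeas j) ht (htail j)
    _ = ENNReal.ofReal ((1 + t) ^ n)⁻¹ := by
        rw [prod_const, card_range, ← ENNReal.ofReal_pow (by positivity), inv_pow]
    _ ≤ ENNReal.ofReal (1 + n * t)⁻¹ :=
        ENNReal.ofReal_le_ofReal <| inv_anti₀ (by positivity) <| one_add_mul_le_pow (by linarith) n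

lemma ProbabilityTheory.iIndepFun.ae_eventually_exists_lt {ξ : ℕ → Ω → ℝ} (hindep : iIndepFun ξ P)
    (hmeas : ∀ j, Measurable (ξ j)) {n : ℕ → ℕ} {x t : ℕ → ℝ} (ht : ∀ k, 0 ≤ t k)
    (htail : ∀ j k, ENNReal.ofReal (t k) ≤ P {ω | x k < ξ j ω})
    (hsum : Summable fun k => (1 + n k * t k)⁻¹) :
    ∀ᵐ ω ∂P, ∀ᶠ k in atTop, ∃ j < n k, x k < ξ j ω := by
  have hfinite : ∑' k, P (⋂ j ∈ range (n k), {ω | ξ j ω ≤ x k}) ≠ ∞ := by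
    refine ne_top_of_le_ne_top ?_ (ENNReal.tsum_le_tsum fun k =>
      hindep.measure_biInter_le_le_ofReal_inv hmeas (ht k) (htail · k) (n k))
    rw [← ENNReal.ofReal_tsum_of_nonneg (fun k => by have := ht k; positivity) hsum]
    exact ENNReal.ofReal_ne_top
  filter_upwards [ae_eventually_notMem hfinite] with ω hω
  simpa using hω

end TailBounds

lemma eventually_lt_sum_range_of_eventually_exists_lt {a f : ℕ → ℝ} (ha : ∀ j, 0 ≤ a j)
    (hf : Monotone f) (h : ∀ᶠ k in atTop, ∃ j < 2 ^ k, f (2 ^ (k + 1)) < a j) :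
    ∀ᶠ i in atTop, f i < ∑ j ∈ range i, a j := by
  obtain ⟨K, hK⟩ := eventually_atTop.mp h
  refine eventually_atTop.mpr ⟨2 ^ K, fun i hi => ?_⟩
  have hi0 : i ≠ 0 := (Nat.two_pow_pos K).trans_le hi |>.ne'
  obtain ⟨j, hj, hja⟩ := hK (Nat.log 2 i) ((Nat.le_log_iff_pow_le one_lt_two hi0).mpr hi)
  calc f i ≤ f (2 ^ (Nat.log 2 i + 1)) := hf (Nat.lt_pow_succ_log_self one_lt_two i).le
    _ < a j := hja
    _ ≤ ∑ j ∈ range i, a j :=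
        single_le_sum (fun j _ => ha j) (mem_range.mpr (hj.trans_le (Nat.pow_log_le_self 2 hi0)))

lemma summable_inv_two_pow_mul_rpow_neg {δ γ : ℝ} (hδ : 0 < δ) (hγ : γ < 1) :
    Summable fun k : ℕ => (2 ^ k * (δ * ((2 : ℝ) ^ (k + 1)) ^ (-γ)))⁻¹ := by
  have hr : (2 : ℝ) ^ γ / 2 < 1 := by
    rw [div_lt_one two_pos]
    simpa using Real.rpow_lt_rpow_of_exponent_lt one_lt_two hγ
  refine ((summable_geometric_of_lt_one (by positivity) hr).mul_left (2 ^ γ / δ)).congr fun k => ?_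
  rw [Real.rpow_neg (by positivity), ← Real.rpow_pow_comm zero_le_two, div_pow]
  field_simp
  ring

/-- heavy-tailed example of Section 1.2 satisfies condition (I).
If `(ξ_j)` are independent nonnegative random variables with
`P(ξ_j > x) ≥ δ x^{-α}` for all `x ≥ 1`, where `δ > 0` and `α ∈ (0,1)`, then for
every `β ∈ (α,1)`, almost surely `liminf_i S_i / i^{1/β} ≥ 1`. -/
theorem heavy_tail_env_satisfies_condition_I
    {Ω : Type*} [MeasurableSpace Ω] (P : Measure Ω) [IsProbabilityMeasure P]
    (δ α : ℝ) (hδ : 0 < δ) (hα : α ∈ Set.Ioo (0 : ℝ) 1)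
    (ξ : ℕ → Ω → ℝ) (hmeas : ∀ j, Measurable (ξ j)) (hnonneg : ∀ j ω, 0 ≤ ξ j ω)
    (hindep : iIndepFun ξ P)
    (htail : ∀ j, ∀ x : ℝ, 1 ≤ x →
      ENNReal.ofReal (δ * x ^ (-α)) ≤ P {ω | x < ξ j ω}) :
    ∀ β : ℝ, β ∈ Set.Ioo α 1 →
      P {ω | (1 : EReal) ≤ Filter.liminf
          (fun i : ℕ => (((∑ j ∈ Finset.range i, ξ j ω) / (i : ℝ) ^ (1 / β) : ℝ) : EReal))
          Filter.atTop} = 1 := by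
  rintro β ⟨hαβ, -⟩
  have hβ : 0 < β := hα.1.trans hαβ
  set f : ℕ → ℝ := fun i => (i : ℝ) ^ (1 / β) with hf
  have hf_mono : Monotone f := fun i j hij =>
    Real.rpow_le_rpow (Nat.cast_nonneg i) (Nat.cast_le.mpr hij) (by positivity)
  have hf_ge_one : ∀ k, 1 ≤ f (2 ^ (k + 1)) := fun k =>
    Real.one_le_rpow (by norm_cast; exact Nat.one_le_two_pow) (by positivity)
  have hsum : Summable fun k : ℕ => (1 + (2 ^ k : ℕ) * (δ * f (2 ^ (k + 1)) ^ (-α)))⁻¹ := by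
    refine (summable_inv_two_pow_mul_rpow_neg hδ ((div_lt_one hβ).mpr hαβ)).of_nonneg_of_le
      (fun k => by positivity) fun k => ?_
    rw [hf, ← Real.rpow_mul (by positivity)]
    push_cast
    rw [one_div_mul_eq_div, neg_div]
    exact inv_anti₀ (by positivity) (by linarith)
  have hae : ∀ᵐ ω ∂P, (1 : EReal) ≤ liminf
      (fun i : ℕ => (((∑ j ∈ Finset.range i, ξ j ω) / (i : ℝ) ^ (1 / β) : ℝ) : EReal)) atTop := by
    filter_upwards [hindep.ae_eventually_exists_lt hmeas (fun k => by positivity)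
      (fun j k => htail j _ (hf_ge_one k)) hsum] with ω hω
    have hlt := eventually_lt_sum_range_of_eventually_exists_lt (hnonneg · ω) hf_mono hω
    refine le_liminf_of_le (by isBoundedDefault) ?_
    filter_upwards [hlt, eventually_ge_atTop 1] with i hi hi1
    have : 0 < (i : ℝ) ^ (1 / β) := by positivity
    exact_mod_cast (one_le_div this).mpr hi.le
  exact (mem_ae_iff_prob_eq_one₀ (NullMeasurableSet.of_null (mem_ae_iff.mp hae)).of_compl).mp hae
end

section
/- Let δ > 0 and α ∈ (0,1), and let (ξ_j)_{j≥1} be independent nonnegative real-valued random variables such that P(ξ_j > x) ≥ δ x^{-α} for every real x ≥ 1 and every j ≥ 1. Let S_i = ξ_1 + ... + ξ_i and let β ∈ (α, 1). Then for every integer i ≥ 1 with δ ≤ i^{α/β}, P( S_i ≤ i^{1/β} ) ≤ exp( -δ i^{γ} ), where γ = 1 - α/β > 0. -/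
/-!
The sum of nonnegative variables dominates each summand, so `S_i ≤ x` forces every `ξ_j ≤ x`,
and by independence `P(S_i ≤ x) ≤ ∏_{j<i} P(ξ_j ≤ x) ≤ (1 - δ x^{-α})^i ≤ exp(-δ x^{-α} i)`.
For `x = i^{1/β}` the exponent is `δ i^{1-α/β}`.
-/

open MeasureTheory Filter Finset ProbabilityTheory
open scoped ENNReal

theorem ENNReal.one_sub_ofReal_le_ofReal_exp_neg (c : ℝ) :
    1 - ENNReal.ofReal c ≤ ENNReal.ofReal (Real.exp (-c)) := by
  have hsplit : (1 : ℝ≥0∞) ≤ ENNReal.ofReal (1 - c) + ENNReal.ofReal c := by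
    simpa using ENNReal.ofReal_add_le (p := 1 - c) (q := c)
  calc 1 - ENNReal.ofReal c ≤ ENNReal.ofReal (1 - c) := tsub_le_iff_right.2 hsplit
    _ ≤ ENNReal.ofReal (Real.exp (-c)) :=
      ENNReal.ofReal_le_ofReal (by linarith [Real.add_one_le_exp (-c)])

theorem ENNReal.one_sub_ofReal_pow_le_ofReal_exp (c : ℝ) (n : ℕ) :
    (1 - ENNReal.ofReal c) ^ n ≤ ENNReal.ofReal (Real.exp (-(c * n))) := by
  calc (1 - ENNReal.ofReal c) ^ n ≤ ENNReal.ofReal (Real.exp (-c)) ^ n :=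
        pow_le_pow_left₀ bot_le (ENNReal.one_sub_ofReal_le_ofReal_exp_neg c) n
    _ = ENNReal.ofReal (Real.exp (-(c * n))) := by
      rw [← ENNReal.ofReal_pow (Real.exp_nonneg _), ← Real.exp_nat_mul]
      ring_nf

theorem prob_setOf_le_eq_one_sub {Ω : Type*} [MeasurableSpace Ω] {P : Measure Ω}
    [IsProbabilityMeasure P] {ξ : Ω → ℝ} (hξ : Measurable ξ) (x : ℝ) :
    P {ω | ξ ω ≤ x} = 1 - P {ω | x < ξ ω} := by
  rw [← prob_compl_eq_one_sub (measurableSet_lt measurable_const hξ)]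
  congr 1
  ext ω
  simp [not_lt]

theorem ProbabilityTheory.iIndepFun.measure_sum_le_le_prod {Ω ι : Type*} [MeasurableSpace Ω]
    {μ : Measure Ω} {ξ : ι → Ω → ℝ} (hξ : iIndepFun ξ μ) (hnonneg : ∀ j ω, 0 ≤ ξ j ω)
    (s : Finset ι) (x : ℝ) :
    μ {ω | ∑ j ∈ s, ξ j ω ≤ x} ≤ ∏ j ∈ s, μ {ω | ξ j ω ≤ x} := by
  have hsub : {ω | ∑ j ∈ s, ξ j ω ≤ x} ⊆ ⋂ j ∈ s, {ω | ξ j ω ≤ x} := fun ω hω =>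
    Set.mem_iInter₂.2 fun j hj =>
      (Finset.single_le_sum (fun k _ => hnonneg k ω) hj).trans hω
  calc μ {ω | ∑ j ∈ s, ξ j ω ≤ x} ≤ μ (⋂ j ∈ s, {ω | ξ j ω ≤ x}) := measure_mono hsub
    _ = ∏ j ∈ s, μ {ω | ξ j ω ≤ x} :=
      hξ.iIndep.meas_biInter fun j _ => ⟨Set.Iic x, measurableSet_Iic, rfl⟩

theorem heavy_tail_sum_small_probability_general
    {Ω : Type*} [MeasurableSpace Ω] (P : Measure Ω) [IsProbabilityMeasure P]
    (δ α : ℝ) (hα : α ∈ Set.Ioo (0 : ℝ) 1)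
    (ξ : ℕ → Ω → ℝ) (hmeas : ∀ j, Measurable (ξ j)) (hnonneg : ∀ j ω, 0 ≤ ξ j ω)
    (hindep : iIndepFun ξ P)
    (htail : ∀ j, ∀ x : ℝ, 1 ≤ x →
      ENNReal.ofReal (δ * x ^ (-α)) ≤ P {ω | x < ξ j ω})
    (β : ℝ) (hβ : β ∈ Set.Ioo α 1) :
    ∀ i : ℕ, 1 ≤ i → δ ≤ (i : ℝ) ^ (α / β) →
      P {ω | ∑ j ∈ Finset.range i, ξ j ω ≤ (i : ℝ) ^ (1 / β)}
        ≤ ENNReal.ofReal (Real.exp (-δ * (i : ℝ) ^ (1 - α / β))) := by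
  intro i hi _
  have hi0 : (0 : ℝ) < i := by exact_mod_cast hi
  set x : ℝ := (i : ℝ) ^ (1 / β)
  have hx1 : 1 ≤ x :=
    Real.one_le_rpow (by exact_mod_cast hi) (one_div_nonneg.2 (hα.1.trans hβ.1).le)
  have hexponent : -(δ * x ^ (-α) * i) = -δ * (i : ℝ) ^ (1 - α / β) := by
    rw [← Real.rpow_mul hi0.le, mul_assoc, ← Real.rpow_add_one hi0.ne']
    ring_nf
  calc P {ω | ∑ j ∈ Finset.range i, ξ j ω ≤ x}
      ≤ ∏ j ∈ Finset.range i, P {ω | ξ j ω ≤ x} := hindep.measure_sum_le_le_prod hnonneg _ x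
    _ ≤ ∏ _j ∈ Finset.range i, (1 - ENNReal.ofReal (δ * x ^ (-α))) :=
      prod_le_prod' fun j _ =>
        (prob_setOf_le_eq_one_sub (hmeas j) x).trans_le (tsub_le_tsub_left (htail j x hx1) 1)
    _ = (1 - ENNReal.ofReal (δ * x ^ (-α))) ^ i := by rw [prod_const, card_range]
    _ ≤ ENNReal.ofReal (Real.exp (-δ * (i : ℝ) ^ (1 - α / β))) := by
      rw [← hexponent]
      exact ENNReal.one_sub_ofReal_pow_le_ofReal_exp _ i

/-- tail estimate in the example of Section 1.2.
If `(ξ_j)` are independent nonnegative random variables with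
`P(ξ_j > x) ≥ δ x^{-α}` for all `x ≥ 1`, where `δ > 0` and `α ∈ (0,1)`, and
`β ∈ (α,1)`, then for every integer `i ≥ 1` with `δ ≤ i^{α/β}`,
`P(S_i ≤ i^{1/β}) ≤ exp(-δ i^{γ})` with `γ = 1 - α/β > 0`. -/
theorem heavy_tail_sum_small_probability
    {Ω : Type*} [MeasurableSpace Ω] (P : Measure Ω) [IsProbabilityMeasure P]
    (δ α : ℝ) (hδ : 0 < δ) (hα : α ∈ Set.Ioo (0 : ℝ) 1)
    (ξ : ℕ → Ω → ℝ) (hmeas : ∀ j, Measurable (ξ j)) (hnonneg : ∀ j ω, 0 ≤ ξ j ω)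
    (hindep : iIndepFun ξ P)
    (htail : ∀ j, ∀ x : ℝ, 1 ≤ x →
      ENNReal.ofReal (δ * x ^ (-α)) ≤ P {ω | x < ξ j ω})
    (β : ℝ) (hβ : β ∈ Set.Ioo α 1) :
    ∀ i : ℕ, 1 ≤ i → δ ≤ (i : ℝ) ^ (α / β) →
      P {ω | ∑ j ∈ Finset.range i, ξ j ω ≤ (i : ℝ) ^ (1 / β)}
        ≤ ENNReal.ofReal (Real.exp (-δ * (i : ℝ) ^ (1 - α / β))) :=
  heavy_tail_sum_small_probability_general P δ α hα ξ hmeas hnonneg hindep htail β hβ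
end
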